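/- arXiv:1903.01622 — 11 statements merged into one kernel-verified Lean document; each statement's English description precedes it below -/
import Mathlib

section
/- Let k ≥ d ≥ 3 be integers and let F be a (d, 2k+d−3)-conditionally intersecting family of k-element subsets of [n]. Then F can be partitioned into three subfamilies H, B and S, the ground set [n] can be partitioned into two subsets Y and Z, and Z can be partitioned into sets V_1, …, V_t each of size at most 2k, such that: (a) every member of H is a subset of Y and contains a (k−1)-element subset that is contained in no other member of F; (b) every member of B is a subset of some V_i; (c) no member of S is a subset of Y, and for every S ∈ S and every i ∈ {1,…,t}, the intersection S ∩ V_i is either empty or has size at least d. -/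
/-- A family `F` of finsets is `(d, s)`-conditionally intersecting if there do not exist
`d` distinct members of `F` whose union has size at most `s` and whose intersection is empty. -/
def CondIntersecting {n : ℕ} (d s : ℕ) (F : Finset (Finset (Fin n))) : Prop :=
  ¬ ∃ D ⊆ F, D.card = d ∧ (D.sup id).card ≤ s ∧ D.inf id = ∅

/-!
Call `A ∈ F` irreducible if it has no own `(k - 1)`-subset, i.e. every `A.erase x` lies in a
swap `insert y (A.erase x) ∈ F` with `y ∉ A`. Each contradiction comes from `d` members
consisting of one or two sets together with swaps of an irreducible `A` at the points of some
`T ⊆ A`: no point of `T` lies in its own swap, so the intersection is empty, while the union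
exceeds the one or two sets only by the swapped-in points. This shows that an irreducible `A`
meets every member in `0` or at least `d - 1` points, that swap points of `A` avoid the members
disjoint from `A`, and that a member meeting `A` in exactly `d - 1` points contains the swap
points of these. Hence the block of `A`, namely `A` with one swap point for each of its points,
has at most `2k` points and meets every member in `0` or at least `d` points, and the blocks of
disjoint irreducible members are disjoint. The `V i` are the blocks of a maximal pairwise
disjoint family of irreducible members; every irreducible member meets their union `Z`, so the
members inside `Y = Zᶜ` have own `(k - 1)`-subsets.
-/

open Finset

theorem Finset.exists_maximal_pairwiseDisjoint {α : Type*} (I : Finset (Finset α)) :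
    ∃ M ⊆ I, (M : Set (Finset α)).PairwiseDisjoint id ∧
      ∀ A ∈ I, A.Nonempty → ∃ B ∈ M, ¬ Disjoint A B := by
  classical
  obtain ⟨M, hM, hmax⟩ := (I.powerset.filter fun M : Finset (Finset α) =>
    (M : Set (Finset α)).PairwiseDisjoint id).exists_maximal ⟨∅, by simp⟩
  rw [mem_filter, mem_powerset] at hM
  refine ⟨M, hM.1, hM.2, fun A hAI hA => ?_⟩
  by_contra! hdisj
  have hAM : A ∉ M := fun hAM => hA.ne_empty (disjoint_self.1 (hdisj A hAM))
  have hins : insert A M ∈ I.powerset.filter fun M : Finset (Finset α) =>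
      (M : Set (Finset α)).PairwiseDisjoint id := by
    rw [mem_filter, mem_powerset, coe_insert]
    exact ⟨insert_subset hAI hM.1,
      hM.2.insert fun B hB _ => hdisj B hB⟩
  exact hAM (hmax hins (subset_insert A M) (mem_insert_self A M))

section Swaps

variable {α : Type*} [DecidableEq α]

def HasOwnSubset (F : Finset (Finset α)) (k : ℕ) (A : Finset α) : Prop :=
  ∃ G ⊆ A, G.card = k - 1 ∧ ∀ S ∈ F, G ⊆ S → S = A

def IsSwap (F : Finset (Finset α)) (A : Finset α) (x y : α) : Prop :=
  y ∉ A ∧ insert y (A.erase x) ∈ F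

open Classical in
noncomputable def swapPoint (F : Finset (Finset α)) (A : Finset α) (x : α) : α :=
  if h : ∃ y, IsSwap F A x y then h.choose else x

def swaps (A T : Finset α) (f : α → α) : Finset (Finset α) :=
  T.image fun x => insert (f x) (A.erase x)

noncomputable def block (F : Finset (Finset α)) (A : Finset α) : Finset α :=
  A ∪ A.image (swapPoint F A)

variable {F : Finset (Finset α)} {k : ℕ} {A T : Finset α} {f : α → α} {x y : α}

theorem exists_isSwap_of_not_hasOwnSubset (hunif : ∀ S ∈ F, S.card = k) (hA : A ∈ F)
    (hown : ¬ HasOwnSubset F k A) (hx : x ∈ A) : ∃ y, IsSwap F A x y := by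
  have hcard : (A.erase x).card = k - 1 := by rw [card_erase_of_mem hx, hunif A hA]
  obtain ⟨S, hS, hxS, hSA⟩ : ∃ S ∈ F, A.erase x ⊆ S ∧ S ≠ A := by
    by_contra! h
    exact hown ⟨A.erase x, erase_subset x A, hcard, h⟩
  obtain ⟨y, hy, rfl⟩ := exists_eq_insert_iff.2
    ⟨hxS, by rw [hcard, hunif S hS, ← hunif A hA]; have := card_pos.2 ⟨x, hx⟩; omega⟩
  refine ⟨y, fun hyA => hSA ?_, hS⟩
  rw [show y = x by by_contra hyx; exact hy (mem_erase.2 ⟨hyx, hyA⟩), insert_erase hx]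

theorem isSwap_swapPoint (hunif : ∀ S ∈ F, S.card = k) (hA : A ∈ F)
    (hown : ¬ HasOwnSubset F k A) (hx : x ∈ A) : IsSwap F A x (swapPoint F A x) := by
  have h := exists_isSwap_of_not_hasOwnSubset hunif hA hown hx
  rw [swapPoint, dif_pos h]
  exact h.choose_spec

theorem notMem_swap (hx : x ∈ A) (hy : y ∉ A) : x ∉ insert y (A.erase x) := by
  rw [mem_insert, not_or]
  exact ⟨fun h => hy (h ▸ hx), notMem_erase x A⟩

theorem swap_inter_self (hy : y ∉ A) : insert y (A.erase x) ∩ A = A.erase x := by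
  rw [insert_inter_of_notMem hy, inter_eq_left.2 (erase_subset x A)]

theorem inter_eq_erase_of_mem_swaps (hf : ∀ x ∈ T, f x ∉ A) {B : Finset α}
    (hB : B ∈ swaps A T f) : ∃ x ∈ T, B ∩ A = A.erase x := by
  obtain ⟨x, hx, rfl⟩ := mem_image.1 hB
  exact ⟨x, hx, swap_inter_self (hf x hx)⟩

theorem card_swaps (hTA : T ⊆ A) (hf : ∀ x ∈ T, f x ∉ A) : (swaps A T f).card = T.card := by
  refine card_image_of_injOn fun x hx x' hx' h => A.erase_injOn (hTA hx) (hTA hx') ?_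
  simpa only [swap_inter_self (hf x hx), swap_inter_self (hf x' hx')] using congrArg (· ∩ A) h

theorem subset_of_mem_swaps {B : Finset α} (hB : B ∈ swaps A T f) : B ⊆ A ∪ T.image f := by
  obtain ⟨x, hx, rfl⟩ := mem_image.1 hB
  exact insert_subset (mem_union_right _ (mem_image_of_mem f hx))
    ((erase_subset x A).trans subset_union_left)

theorem swaps_subset (hf : ∀ x ∈ T, IsSwap F A x (f x)) : swaps A T f ⊆ F := by
  intro B hB
  obtain ⟨x, hx, rfl⟩ := mem_image.1 hB
  exact (hf x hx).2

theorem exists_isSwap_of_mem_image_swapPoint (hunif : ∀ S ∈ F, S.card = k) (hA : A ∈ F)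
    (hown : ¬ HasOwnSubset F k A) (hy : y ∈ A.image (swapPoint F A)) : ∃ x ∈ A, IsSwap F A x y := by
  obtain ⟨x, hx, rfl⟩ := mem_image.1 hy
  exact ⟨x, hx, isSwap_swapPoint hunif hA hown hx⟩

theorem card_block_le (F : Finset (Finset α)) (A : Finset α) : (block F A).card ≤ 2 * A.card :=
  (card_union_le _ _).trans (by have := card_image_le (s := A) (f := swapPoint F A); omega)

end Swaps

namespace CondIntersecting

variable {n k d s : ℕ} {F : Finset (Finset (Fin n))} {A B S T : Finset (Fin n)}
  {f : Fin n → Fin n}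

theorem exists_forall_mem (hci : CondIntersecting d s F) {D : Finset (Finset (Fin n))}
    (hDF : D ⊆ F) (hD : D.card = d) (U : Finset (Fin n)) (hU : ∀ X ∈ D, X ⊆ U)
    (hUs : U.card ≤ s) : ∃ z, ∀ X ∈ D, z ∈ X := by
  by_contra! h
  refine hci ⟨D, hDF, hD, (card_le_card (Finset.sup_le hU)).trans hUs, eq_empty_of_forall_notMem
    fun z hz => ?_⟩
  obtain ⟨X, hX, hzX⟩ := h z
  exact hzX (inf_le (f := id) hX hz)

theorem mem_of_isSwap_of_card_inter (hci : CondIntersecting d (2 * k + d - 3) F) (hd : 3 ≤ d)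
    (hunif : ∀ S ∈ F, S.card = k) (hA : A ∈ F) (hS : S ∈ F) (hSA : (S ∩ A).card = d - 1)
    (hf : ∀ x ∈ S ∩ A, IsSwap F A x (f x)) {x : Fin n} (hx : x ∈ S ∩ A) : f x ∈ S := by
  have hfA : ∀ x ∈ S ∩ A, f x ∉ A := fun x hx => (hf x hx).1
  have hSswaps : S ∉ swaps A (S ∩ A) f := fun h => by
    obtain ⟨x, hx, hSx⟩ := inter_eq_erase_of_mem_swaps hfA h
    exact notMem_erase x A (hSx ▸ hx)
  obtain ⟨z, hz⟩ := hci.exists_forall_mem (D := insert S (swaps A (S ∩ A) f))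
    (insert_subset hS (swaps_subset hf))
    (by rw [card_insert_of_notMem hSswaps, card_swaps inter_subset_right hfA]; omega)
    (S ∪ A ∪ (S ∩ A).image f)
    (forall_mem_insert _ _ _ |>.2 ⟨subset_union_left.trans subset_union_left,
      fun X hX => (subset_of_mem_swaps hX).trans (union_subset_union_left subset_union_right)⟩)
    (by
      have := card_union_add_card_inter S A
      have := card_union_le (S ∪ A) ((S ∩ A).image f)
      have := card_image_le (s := S ∩ A) (f := f)
      rw [hunif S hS, hunif A hA] at *
      omega)
  have hzS : z ∈ S := hz S (mem_insert_self _ _)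
  have hzA : z ∉ A := fun hzA => notMem_swap hzA (hfA z (mem_inter.2 ⟨hzS, hzA⟩))
    (hz _ (mem_insert_of_mem (mem_image_of_mem _ (mem_inter.2 ⟨hzS, hzA⟩))))
  obtain h | h := mem_insert.1 (hz _ (mem_insert_of_mem (mem_image_of_mem _ hx)))
  · exact h ▸ hzS
  · exact absurd (mem_of_mem_erase h) hzA

theorem false_of_swaps (hci : CondIntersecting d (2 * k + d - 3) F) (hd : 2 ≤ d)
    (hunif : ∀ S ∈ F, S.card = k) (hA : A ∈ F) (hB : B ∈ F) (hTA : T ⊆ A)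
    (hT : T.card = d - 2) (hf : ∀ x ∈ T, IsSwap F A x (f x)) (hABT : A ∩ B ⊆ T)
    (hAB : (A ∩ B).card < k - 1) (hU : (A ∪ B ∪ T.image f).card ≤ 2 * k + d - 3) : False := by
  have hfA : ∀ x ∈ T, f x ∉ A := fun x hx => (hf x hx).1
  have hAswaps : A ∉ swaps A T f := fun h => by
    obtain ⟨x, hx, hAx⟩ := inter_eq_erase_of_mem_swaps hfA h
    rw [inter_self] at hAx
    exact notMem_erase x A (hAx ▸ hTA hx)
  have hBswaps : B ∉ swaps A T f := fun h => by
    obtain ⟨x, hx, hBx⟩ := inter_eq_erase_of_mem_swaps hfA h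
    rw [inter_comm, hBx, card_erase_of_mem (hTA hx), hunif A hA] at hAB
    omega
  have hAB' : A ≠ B := by
    rintro rfl
    rw [inter_self, hunif A hA] at hAB
    omega
  obtain ⟨z, hz⟩ := hci.exists_forall_mem (D := insert A (insert B (swaps A T f)))
    (insert_subset hA (insert_subset hB (swaps_subset hf)))
    (by
      rw [card_insert_of_notMem (by simp [hAB', hAswaps]), card_insert_of_notMem hBswaps,
        card_swaps hTA hfA]
      omega)
    (A ∪ B ∪ T.image f)
    (by
      simp only [forall_mem_insert]
      exact ⟨subset_union_left.trans subset_union_left,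
        subset_union_right.trans subset_union_left, fun X hX => (subset_of_mem_swaps hX).trans
          (union_subset_union_left subset_union_left)⟩)
    hU
  have hzT := hABT (mem_inter.2 ⟨hz A (mem_insert_self _ _),
    hz B (mem_insert_of_mem (mem_insert_self _ _))⟩)
  exact notMem_swap (hTA hzT) (hfA z hzT)
    (hz _ (mem_insert_of_mem (mem_insert_of_mem (mem_image_of_mem _ hzT))))

theorem le_card_inter (hci : CondIntersecting d (2 * k + d - 3) F) (hd : 3 ≤ d) (hdk : d ≤ k)
    (hunif : ∀ S ∈ F, S.card = k) (hA : A ∈ F) (hown : ¬ HasOwnSubset F k A) (hB : B ∈ F)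
    (hAB : (A ∩ B).Nonempty) : d - 1 ≤ (A ∩ B).card := by
  by_contra! hlt
  obtain ⟨T, hABT, hTA, hT⟩ :=
    exists_subsuperset_card_eq (n := d - 2) (inter_subset_left : A ∩ B ⊆ A)
    (by omega) (by rw [hunif A hA]; omega)
  refine hci.false_of_swaps (by omega) hunif hA hB hTA hT
    (fun x hx => isSwap_swapPoint hunif hA hown (hTA hx)) hABT (by omega) ?_
  have := card_union_add_card_inter A B
  have := card_union_le (A ∪ B) (T.image (swapPoint F A))
  have := card_image_le (s := T) (f := swapPoint F A)
  have := hAB.card_pos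
  rw [hunif A hA, hunif B hB] at *
  omega

theorem notMem_of_isSwap (hci : CondIntersecting d (2 * k + d - 3) F) (hd : 3 ≤ d)
    (hdk : d ≤ k) (hunif : ∀ S ∈ F, S.card = k) (hA : A ∈ F) (hown : ¬ HasOwnSubset F k A)
    {x₀ y : Fin n} (hx₀ : x₀ ∈ A) (hy : IsSwap F A x₀ y) (hS : S ∈ F) (hAS : Disjoint A S) :
    y ∉ S := by
  intro hyS
  obtain ⟨T, hx₀T, hTA, hT⟩ := exists_subsuperset_card_eq (n := d - 2)
    (singleton_subset_iff.2 hx₀) (by rw [card_singleton]; omega) (by rw [hunif A hA]; omega)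
  rw [singleton_subset_iff] at hx₀T
  set f := Function.update (swapPoint F A) x₀ y
  have hf : ∀ x ∈ T, IsSwap F A x (f x) := by
    intro x hx
    by_cases hxx₀ : x = x₀
    · subst hxx₀
      simpa [f] using hy
    · simpa [f, hxx₀] using isSwap_swapPoint hunif hA hown (hTA hx)
  have himage : T.image f ⊆ insert y ((T.erase x₀).image f) := by
    intro z hz
    obtain ⟨x, hx, rfl⟩ := mem_image.1 hz
    by_cases hxx₀ : x = x₀
    · simp [f, hxx₀]
    · exact mem_insert_of_mem (mem_image_of_mem f (mem_erase.2 ⟨hxx₀, hx⟩))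
  refine hci.false_of_swaps (by omega) hunif hA hS hTA hT hf
    (by simp [disjoint_iff_inter_eq_empty.1 hAS])
    (by simp [disjoint_iff_inter_eq_empty.1 hAS]; omega) ?_
  have hsub : A ∪ S ∪ T.image f ⊆ A ∪ S ∪ (T.erase x₀).image f :=
    union_subset subset_union_left (himage.trans (insert_subset
      (mem_union_left _ (mem_union_right _ hyS)) subset_union_right))
  have := card_le_card hsub
  have := card_union_le (A ∪ S) ((T.erase x₀).image f)
  have := card_image_le (s := T.erase x₀) (f := f)
  have := card_union_of_disjoint hAS
  rw [card_erase_of_mem hx₀T, hT, hunif A hA, hunif S hS] at *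
  omega

theorem disjoint_image_swapPoint (hci : CondIntersecting d (2 * k + d - 3) F) (hd : 3 ≤ d)
    (hdk : d ≤ k) (hunif : ∀ S ∈ F, S.card = k) (hA : A ∈ F) (hown : ¬ HasOwnSubset F k A)
    (hS : S ∈ F) (hAS : Disjoint A S) : Disjoint S (A.image (swapPoint F A)) :=
  disjoint_right.2 fun y hy => by
    obtain ⟨x, hx, hxy⟩ := exists_isSwap_of_mem_image_swapPoint hunif hA hown hy
    exact hci.notMem_of_isSwap hd hdk hunif hA hown hx hxy hS hAS

theorem inter_block (hci : CondIntersecting d (2 * k + d - 3) F) (hd : 3 ≤ d) (hdk : d ≤ k)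
    (hunif : ∀ S ∈ F, S.card = k) (hA : A ∈ F) (hown : ¬ HasOwnSubset F k A) (hS : S ∈ F) :
    S ∩ block F A = ∅ ∨ d ≤ (S ∩ block F A).card := by
  by_cases hAS : Disjoint A S
  · exact .inl <| disjoint_iff_inter_eq_empty.1 <| disjoint_union_right.2
      ⟨hAS.symm, hci.disjoint_image_swapPoint hd hdk hunif hA hown hS hAS⟩
  right
  have hSA : d - 1 ≤ (S ∩ A).card := inter_comm A S ▸
    hci.le_card_inter hd hdk hunif hA hown hS (not_disjoint_iff_nonempty_inter.1 hAS)
  have hsub : S ∩ A ⊆ S ∩ block F A := inter_subset_inter_left subset_union_left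
  obtain hSA | hSA := hSA.eq_or_lt
  · obtain ⟨x, hx⟩ : (S ∩ A).Nonempty := card_pos.1 (by omega)
    have hf : ∀ x ∈ S ∩ A, IsSwap F A x (swapPoint F A x) :=
      fun x hx => isSwap_swapPoint hunif hA hown (mem_inter.1 hx).2
    have hxS := hci.mem_of_isSwap_of_card_inter hd hunif hA hS hSA.symm hf hx
    calc d = (insert (swapPoint F A x) (S ∩ A)).card := by
          rw [card_insert_of_notMem fun h => (hf x hx).1 (mem_inter.1 h).2, ← hSA]; omega
      _ ≤ (S ∩ block F A).card := card_le_card (insert_subset (mem_inter.2 ⟨hxS,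
          mem_union_right _ (mem_image_of_mem _ (mem_inter.1 hx).2)⟩) hsub)
  · exact (show d ≤ (S ∩ A).card by omega).trans (card_le_card hsub)

theorem disjoint_block (hci : CondIntersecting d (2 * k + d - 3) F) (hd : 3 ≤ d) (hdk : d ≤ k)
    (hunif : ∀ S ∈ F, S.card = k) (hA : A ∈ F) (hB : B ∈ F) (hownA : ¬ HasOwnSubset F k A)
    (hownB : ¬ HasOwnSubset F k B) (hAB : Disjoint A B) : Disjoint (block F A) (block F B) := by
  refine disjoint_union_left.2 ⟨disjoint_union_right.2
    ⟨hAB, hci.disjoint_image_swapPoint hd hdk hunif hB hownB hA hAB.symm⟩,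
    disjoint_union_right.2 ⟨(hci.disjoint_image_swapPoint hd hdk hunif hA hownA hB hAB).symm,
      disjoint_left.2 fun y hyA hyB => ?_⟩⟩
  -- a common swap point `y` would lie in the swap `insert y (A.erase x) ∈ F`, disjoint from `B`
  obtain ⟨x, hx, hxy⟩ := exists_isSwap_of_mem_image_swapPoint hunif hA hownA hyA
  obtain ⟨-, -, hyB', -⟩ := exists_isSwap_of_mem_image_swapPoint hunif hB hownB hyB
  exact disjoint_left.1 (hci.disjoint_image_swapPoint hd hdk hunif hB hownB hxy.2
    (disjoint_insert_right.2 ⟨hyB', hAB.symm.mono_right (erase_subset x A)⟩))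
    (mem_insert_self y _) hyB

end CondIntersecting

theorem exists_decomposition_of_blocks {n k d : ℕ} {F : Finset (Finset (Fin n))} {t : ℕ}
    (V : Fin t → Finset (Fin n)) (hV : ∀ i j : Fin t, i ≠ j → Disjoint (V i) (V j))
    (hcard : ∀ i, (V i).card ≤ 2 * k)
    (hmeet : ∀ S ∈ F, ∀ i, S ∩ V i = ∅ ∨ d ≤ (S ∩ V i).card)
    (hcover : ∀ H ∈ F, ¬ HasOwnSubset F k H → ¬ Disjoint H (univ.sup V)) :
    ∃ (𝓗 𝓑 𝓢 : Finset (Finset (Fin n))) (Y Z : Finset (Fin n))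
      (t : ℕ) (V : Fin t → Finset (Fin n)),
      Disjoint 𝓗 𝓑 ∧ Disjoint 𝓗 𝓢 ∧ Disjoint 𝓑 𝓢 ∧ 𝓗 ∪ 𝓑 ∪ 𝓢 = F ∧
      Disjoint Y Z ∧ Y ∪ Z = Finset.univ ∧
      (∀ i j : Fin t, i ≠ j → Disjoint (V i) (V j)) ∧
      Finset.univ.sup V = Z ∧
      (∀ i : Fin t, (V i).card ≤ 2 * k) ∧
      (∀ H ∈ 𝓗, H ⊆ Y ∧ ∃ G ⊆ H, G.card = k - 1 ∧ ∀ S ∈ F, G ⊆ S → S = H) ∧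
      (∀ E ∈ 𝓑, ∃ i : Fin t, E ⊆ V i) ∧
      (∀ S ∈ 𝓢, ¬ S ⊆ Y ∧ ∀ i : Fin t, S ∩ V i = ∅ ∨ d ≤ (S ∩ V i).card) := by
  classical
  set Z := univ.sup V
  refine ⟨F.filter fun S => (¬ ∃ i, S ⊆ V i) ∧ Disjoint S Z, F.filter fun S => ∃ i, S ⊆ V i,
    F.filter fun S => (¬ ∃ i, S ⊆ V i) ∧ ¬ Disjoint S Z, Zᶜ, Z, t, V,
    disjoint_filter.2 fun _ _ h => h.1,
    disjoint_filter.2 fun _ _ h => not_and.2 fun _ => not_not.2 h.2,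
    disjoint_filter.2 fun _ _ h h' => h'.1 h, ?_, disjoint_compl_left, compl_sup_eq_top, hV, rfl,
    hcard, fun H hH => ?_, fun E hE => (mem_filter.1 hE).2, fun S hS => ?_⟩
  · ext S
    simp only [mem_union, mem_filter]
    tauto
  · obtain ⟨hHF, -, hHZ⟩ := mem_filter.1 hH
    exact ⟨subset_compl_iff_disjoint_right.2 hHZ, not_not.1 fun hown => hcover H hHF hown hHZ⟩
  · obtain ⟨hSF, -, hSZ⟩ := mem_filter.1 hS
    exact ⟨fun h => hSZ (subset_compl_iff_disjoint_right.1 h), hmeet S hSF⟩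

theorem stmt0 (n k d : ℕ) (hd : 3 ≤ d) (hdk : d ≤ k)
    (F : Finset (Finset (Fin n))) (hunif : ∀ S ∈ F, S.card = k)
    (hci : CondIntersecting d (2 * k + d - 3) F) :
    ∃ (𝓗 𝓑 𝓢 : Finset (Finset (Fin n))) (Y Z : Finset (Fin n))
      (t : ℕ) (V : Fin t → Finset (Fin n)),
      Disjoint 𝓗 𝓑 ∧ Disjoint 𝓗 𝓢 ∧ Disjoint 𝓑 𝓢 ∧ 𝓗 ∪ 𝓑 ∪ 𝓢 = F ∧
      Disjoint Y Z ∧ Y ∪ Z = Finset.univ ∧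
      (∀ i j : Fin t, i ≠ j → Disjoint (V i) (V j)) ∧
      Finset.univ.sup V = Z ∧
      (∀ i : Fin t, (V i).card ≤ 2 * k) ∧
      (∀ H ∈ 𝓗, H ⊆ Y ∧ ∃ G ⊆ H, G.card = k - 1 ∧ ∀ S ∈ F, G ⊆ S → S = H) ∧
      (∀ E ∈ 𝓑, ∃ i : Fin t, E ⊆ V i) ∧
      (∀ S ∈ 𝓢, ¬ S ⊆ Y ∧ ∀ i : Fin t, S ∩ V i = ∅ ∨ d ≤ (S ∩ V i).card) := by
  classical
  obtain ⟨M, hMI, hMdisj, hMmax⟩ :=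
    (F.filter fun A => ¬ HasOwnSubset F k A).exists_maximal_pairwiseDisjoint
  have hM : ∀ A ∈ M, A ∈ F ∧ ¬ HasOwnSubset F k A := fun A hA => mem_filter.1 (hMI hA)
  let A : Fin M.card → Finset (Fin n) := fun i => M.equivFin.symm i
  have hA : ∀ i, A i ∈ M := fun i => (M.equivFin.symm i).2
  refine exists_decomposition_of_blocks (fun i => block F (A i)) (fun i j hij => ?_)
    (fun i => (card_block_le F (A i)).trans (by rw [hunif _ (hM _ (hA i)).1]))
    (fun S hS i => hci.inter_block hd hdk hunif (hM _ (hA i)).1 (hM _ (hA i)).2 hS)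
    (fun H hH hown hHZ => ?_)
  · refine hci.disjoint_block hd hdk hunif (hM _ (hA i)).1 (hM _ (hA j)).1 (hM _ (hA i)).2
      (hM _ (hA j)).2 (hMdisj (hA i) (hA j) fun h => hij ?_)
    exact M.equivFin.symm.injective (Subtype.ext h)
  obtain ⟨B, hB, hHB⟩ := hMmax H (mem_filter.2 ⟨hH, hown⟩)
    (card_pos.1 (by rw [hunif H hH]; omega))
  refine hHB (hHZ.mono_right ?_)
  calc B = A (M.equivFin ⟨B, hB⟩) := by simp [A]
    _ ⊆ block F (A (M.equivFin ⟨B, hB⟩)) := subset_union_left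
    _ ⊆ univ.sup fun i => block F (A i) := le_sup (f := fun i => block F (A i)) (mem_univ _)
end

section
/- Let k ≥ 3 be an integer and let F be a (k, 2k)-conditionally intersecting family of k-element subsets of [n]. Then F can be partitioned into two subfamilies H and B, the ground set [n] can be partitioned into two subsets Y and Z, and Z can be partitioned into sets V_1, …, V_t each of size exactly k+1 (so t = |Z|/(k+1)), such that: (a) every member of H is a subset of Y and contains a (k−1)-element subset that is contained in no other member of F; (b) B is exactly the union over i ∈ {1,…,t} of the family of all k-element subsets of V_i, i.e., B is the vertex-disjoint union of t copies of the complete k-graph on k+1 vertices. -/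
open Finset

variable {n k : ℕ} {F : Finset (Finset (Fin n))} {H S V : Finset (Fin n)}

def HasPrivateSubset (k : ℕ) (F : Finset (Finset (Fin n))) (H : Finset (Fin n)) : Prop :=
  ∃ G ⊆ H, G.card = k - 1 ∧ ∀ S ∈ F, G ⊆ S → S = H

def IsBlock (k : ℕ) (F : Finset (Finset (Fin n))) (V : Finset (Fin n)) : Prop :=
  V.card = k + 1 ∧ V.powersetCard k ⊆ F

theorem CondIntersecting.exists_forall_mem_s1 {d s : ℕ} (hci : CondIntersecting d s F)
    {D : Finset (Finset (Fin n))} (hDF : D ⊆ F) (hD : D.card = d) {U : Finset (Fin n)}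
    (hDU : ∀ T ∈ D, T ⊆ U) (hU : U.card ≤ s) : ∃ x, ∀ T ∈ D, x ∈ T := by
  have hsup : (D.sup id).card ≤ s := (card_le_card (Finset.sup_le hDU)).trans hU
  obtain ⟨x, hx⟩ := nonempty_iff_ne_empty.2 fun h => hci ⟨D, hDF, hD, hsup, h⟩
  exact ⟨x, fun T hT => (inf_le hT : D.inf id ≤ T) hx⟩

theorem IsBlock.erase_mem (hV : IsBlock k F V) {w : Fin n} (hw : w ∈ V) : V.erase w ∈ F :=
  hV.2 (mem_powersetCard.2 ⟨erase_subset _ _, by rw [card_erase_of_mem hw, hV.1]; rfl⟩)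

theorem isBlock_of_forall_erase_mem (hV : V.card = k + 1) (h : ∀ w ∈ V, V.erase w ∈ F) :
    IsBlock k F V := by
  refine ⟨hV, fun T hT => ?_⟩
  rw [mem_powersetCard] at hT
  obtain ⟨w, hwT, rfl⟩ := exists_eq_insert_iff.2 ⟨hT.1, by rw [hT.2, hV]⟩
  simpa only [erase_insert hwT] using h w (mem_insert_self w T)

theorem IsBlock.not_hasPrivateSubset (hk : 0 < k) (hV : IsBlock k F V) (hHV : H ⊆ V)
    (hH : H.card = k) : ¬ HasPrivateSubset k F H := by
  rintro ⟨G, hGH, hG, hGF⟩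
  obtain ⟨w, hwV, hwH⟩ : ∃ w ∈ V, w ∉ H :=
    not_subset.1 fun h => by have := card_le_card h; have := hV.1; omega
  have hwG : w ∉ G := fun h => hwH (hGH h)
  have hwGF : insert w G ∈ F := hV.2 <| mem_powersetCard.2
    ⟨insert_subset hwV (hGH.trans hHV), by rw [card_insert_of_notMem hwG, hG]; omega⟩
  exact hwH (hGF _ hwGF (subset_insert _ _) ▸ mem_insert_self w G)

theorem IsBlock.subset_of_not_disjoint (hk : 2 ≤ k) (hunif : ∀ S ∈ F, S.card = k)
    (hci : CondIntersecting k (2 * k) F) (hV : IsBlock k F V) (hS : S ∈ F)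
    (hSV : ¬ Disjoint S V) : S ⊆ V := by
  by_contra hSV'
  obtain ⟨z, hzS, hzV⟩ := not_disjoint_iff.1 hSV
  have hSk := hunif S hS
  have hVk := hV.1
  have hinter : 1 ≤ (S ∩ V).card := card_pos.2 ⟨z, mem_inter.2 ⟨hzS, hzV⟩⟩
  have hout : 1 ≤ (S \ V).card := card_pos.2 (sdiff_nonempty.2 hSV')
  have hVS : 1 < (V \ S).card := by
    have h₁ := card_inter_add_card_sdiff V S
    have h₂ := card_inter_add_card_sdiff S V
    rw [inter_comm] at h₁
    omega
  obtain ⟨p, hp, q, hq, hpq⟩ := one_lt_card.1 hVS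
  rw [mem_sdiff] at hp hq
  set W := V \ {p, q}
  have hW : W.card = k - 1 := by
    rw [card_sdiff_of_subset (insert_subset hp.1 (singleton_subset_iff.2 hq.1)),
      card_pair hpq, hVk]
    omega
  set D := insert S (W.image V.erase)
  have hDF : D ⊆ F :=
    insert_subset hS (image_subset_iff.2 fun w hw => hV.erase_mem (sdiff_subset hw))
  have hD : D.card = k := by
    have hSW : S ∉ W.image V.erase := fun h => by
      obtain ⟨w, -, rfl⟩ := mem_image.1 h
      exact hSV' (erase_subset _ _)
    rw [card_insert_of_notMem hSW, card_image_of_injOn ((erase_injOn V).mono sdiff_subset), hW]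
    omega
  have hDU : ∀ T ∈ D, T ⊆ V ∪ S := forall_mem_insert _ _ _ |>.2
    ⟨subset_union_right, forall_mem_image.2 fun w _ => (erase_subset _ _).trans subset_union_left⟩
  have hU : (V ∪ S).card ≤ 2 * k := by
    have := card_union_add_card_inter V S
    rw [inter_comm] at this
    omega
  obtain ⟨x, hx⟩ := hci.exists_forall_mem_s1 hDF hD hDU hU
  obtain ⟨w, hw⟩ : W.Nonempty := card_pos.1 (by omega)
  have hxS := hx S (mem_insert_self _ _)
  have hxV := mem_of_mem_erase (hx _ (mem_insert_of_mem (mem_image_of_mem _ hw)))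
  have hxW : x ∈ W := by
    rw [mem_sdiff, mem_insert, mem_singleton]
    exact ⟨hxV, by rintro (rfl | rfl) <;> simp_all⟩
  exact (mem_erase.1 (hx _ (mem_insert_of_mem (mem_image_of_mem _ hxW)))).1 rfl

theorem IsBlock.eq_or_disjoint (hk : 2 ≤ k) (hunif : ∀ S ∈ F, S.card = k)
    (hci : CondIntersecting k (2 * k) F) {V₁ V₂ : Finset (Fin n)} (hV₁ : IsBlock k F V₁)
    (hV₂ : IsBlock k F V₂) : V₁ = V₂ ∨ Disjoint V₁ V₂ := by
  refine or_iff_not_imp_right.2 fun h => ?_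
  obtain ⟨v, hv₁, hv₂⟩ := not_disjoint_iff.1 h
  by_contra hne
  obtain ⟨u, hu₂, hu₁⟩ : ∃ u ∈ V₂, u ∉ V₁ := not_subset.1 fun h' =>
    hne (eq_of_subset_of_card_le h' (by rw [hV₁.1, hV₂.1])).symm
  have huv : u ≠ v := fun h => hu₁ (h ▸ hv₁)
  -- `V₂ \ {u}` meets `V₁` in `v`, so lies in `V₁`;
  -- then `V₂ \ {v}` meets `V₁` but contains `u ∉ V₁`.
  have hu : V₂.erase u ⊆ V₁ := hV₁.subset_of_not_disjoint hk hunif hci (hV₂.erase_mem hu₂)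
    (not_disjoint_iff.2 ⟨v, mem_erase.2 ⟨huv.symm, hv₂⟩, hv₁⟩)
  obtain ⟨w, hw⟩ : ((V₂.erase u).erase v).Nonempty := by
    rw [← card_pos, card_erase_of_mem (mem_erase.2 ⟨huv.symm, hv₂⟩), card_erase_of_mem hu₂,
      hV₂.1]
    omega
  have hv : ¬ Disjoint (V₂.erase v) V₁ := not_disjoint_iff.2
    ⟨w, mem_erase.2 ⟨(mem_erase.1 hw).1, mem_of_mem_erase (mem_of_mem_erase hw)⟩,
      hu (mem_of_mem_erase hw)⟩
  exact hu₁ (hV₁.subset_of_not_disjoint hk hunif hci (hV₂.erase_mem hv₂) hv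
    (mem_erase.2 ⟨huv, hu₂⟩))

theorem HasPrivateSubset.disjoint_of_isBlock (hk : 2 ≤ k) (hunif : ∀ S ∈ F, S.card = k)
    (hci : CondIntersecting k (2 * k) F) (hpriv : HasPrivateSubset k F H) (hH : H ∈ F)
    (hV : IsBlock k F V) : Disjoint H V := by
  by_contra h
  exact hV.not_hasPrivateSubset (by omega) (hV.subset_of_not_disjoint hk hunif hci hH h)
    (hunif H hH) hpriv

theorem exists_insert_erase_mem_of_not_hasPrivateSubset (hk : 0 < k)
    (hunif : ∀ S ∈ F, S.card = k) (hH : H ∈ F) (hpriv : ¬ HasPrivateSubset k F H) {a : Fin n}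
    (ha : a ∈ H) : ∃ x ∉ H, insert x (H.erase a) ∈ F := by
  have hG : (H.erase a).card = k - 1 := by rw [card_erase_of_mem ha, hunif H hH]
  obtain ⟨S, hSF, hGS, hSH⟩ : ∃ S ∈ F, H.erase a ⊆ S ∧ S ≠ H := by
    by_contra! h
    exact hpriv ⟨_, erase_subset _ _, hG, h⟩
  obtain ⟨x, hxG, rfl⟩ := exists_eq_insert_iff.2 ⟨hGS, by rw [hG, hunif _ hSF]; omega⟩
  refine ⟨x, fun hxH => hSH ?_, hSF⟩
  obtain rfl : x = a := by_contra fun hxa => hxG (mem_erase.2 ⟨hxa, hxH⟩)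
  exact insert_erase ha

theorem exists_isBlock_superset_of_not_hasPrivateSubset (hk : 2 ≤ k)
    (hunif : ∀ S ∈ F, S.card = k) (hci : CondIntersecting k (2 * k) F) (hH : H ∈ F)
    (hpriv : ¬ HasPrivateSubset k F H) : ∃ V, IsBlock k F V ∧ H ⊆ V := by
  choose! X hXH hXF using fun a (ha : a ∈ H) =>
    exists_insert_erase_mem_of_not_hasPrivateSubset (by omega) hunif hH hpriv ha
  set f := fun a => insert (X a) (H.erase a)
  have hf : ∀ a ∈ H, a ∉ f a := fun a ha h =>
    (mem_insert.1 h).elim (fun h' => hXH a ha (h' ▸ ha)) (fun h' => (mem_erase.1 h').1 rfl)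
  have hinj : Set.InjOn f H := fun a ha b hb hab => by_contra fun hne =>
    hf b hb (hab ▸ mem_insert_of_mem (mem_erase.2 ⟨Ne.symm hne, hb⟩))
  have hHk := hunif H hH
  have hD : (H.image f).card = k := by rw [card_image_of_injOn hinj, hHk]
  have hDU : ∀ T ∈ H.image f, T ⊆ H ∪ H.image X := forall_mem_image.2 fun a ha =>
    insert_subset (mem_union_right _ (mem_image_of_mem X ha))
      ((erase_subset _ _).trans subset_union_left)
  have hU : (H ∪ H.image X).card ≤ 2 * k := by
    have := card_union_le H (H.image X)
    have := card_image_le (s := H) (f := X)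
    omega
  obtain ⟨y, hy⟩ := hci.exists_forall_mem_s1 (image_subset_iff.2 hXF) hD hDU hU
  have hyH : y ∉ H := fun h => hf y h (hy _ (mem_image_of_mem f h))
  have hXy : ∀ a ∈ H, X a = y := fun a ha =>
    ((mem_insert.1 (hy _ (mem_image_of_mem f ha))).resolve_right
      fun h => hyH (mem_of_mem_erase h)).symm
  refine ⟨insert y H, isBlock_of_forall_erase_mem (by rw [card_insert_of_notMem hyH, hHk])
    fun w hw => ?_, subset_insert _ _⟩
  rcases eq_or_ne w y with rfl | hwy
  · rwa [erase_insert hyH]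
  · have hwH := (mem_insert.1 hw).resolve_left hwy
    rw [erase_insert_of_ne hwy.symm, ← hXy w hwH]
    exact hXF w hwH

theorem Finset.exists_fin_enum {β : Type*} (s : Finset β) :
    ∃ (t : ℕ) (V : Fin t → β), Function.Injective V ∧ ∀ b, b ∈ s ↔ ∃ i, V i = b :=
  ⟨s.card, fun i => s.equivFin.symm i, Subtype.val_injective.comp s.equivFin.symm.injective,
    fun b => ⟨fun hb => ⟨s.equivFin ⟨b, hb⟩, by simp⟩,
      by rintro ⟨i, rfl⟩; exact (s.equivFin.symm i).2⟩⟩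

theorem stmt1 (n k : ℕ) (hk : 3 ≤ k)
    (F : Finset (Finset (Fin n))) (hunif : ∀ S ∈ F, S.card = k)
    (hci : CondIntersecting k (2 * k) F) :
    ∃ (𝓗 𝓑 : Finset (Finset (Fin n))) (Y Z : Finset (Fin n))
      (t : ℕ) (V : Fin t → Finset (Fin n)),
      Disjoint 𝓗 𝓑 ∧ 𝓗 ∪ 𝓑 = F ∧
      Disjoint Y Z ∧ Y ∪ Z = Finset.univ ∧
      (∀ i j : Fin t, i ≠ j → Disjoint (V i) (V j)) ∧
      Finset.univ.sup V = Z ∧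
      (∀ i : Fin t, (V i).card = k + 1) ∧
      (∀ H ∈ 𝓗, H ⊆ Y ∧ ∃ G ⊆ H, G.card = k - 1 ∧ ∀ S ∈ F, G ⊆ S → S = H) ∧
      𝓑 = Finset.univ.biUnion (fun i : Fin t => (V i).powersetCard k) := by
  classical
  have hk2 : 2 ≤ k := by omega
  obtain ⟨t, V, hVinj, hV⟩ := (univ.filter (IsBlock k F)).exists_fin_enum
  have hVblock : ∀ i, IsBlock k F (V i) := fun i => (mem_filter.1 ((hV _).2 ⟨i, rfl⟩)).2
  refine ⟨F.filter (HasPrivateSubset k F), F.filter (¬ HasPrivateSubset k F ·),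
    (univ.sup V)ᶜ, univ.sup V, t, V, disjoint_filter_filter_not _ _ _,
    filter_union_filter_not_eq _ _, disjoint_compl_left, by rw [union_comm, union_compl],
    fun i j hij => ((hVblock i).eq_or_disjoint hk2 hunif hci (hVblock j)).resolve_left
      (hVinj.ne hij), rfl, fun i => (hVblock i).1, fun H hH => ?_, ?_⟩
  · obtain ⟨hHF, hpriv⟩ := mem_filter.1 hH
    refine ⟨subset_compl_iff_disjoint_right.2 (Finset.disjoint_sup_right.2 fun i _ => ?_), hpriv⟩
    exact hpriv.disjoint_of_isBlock hk2 hunif hci hHF (hVblock i)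
  · ext T
    simp only [mem_filter, mem_biUnion, mem_univ, true_and, mem_powersetCard]
    constructor
    · rintro ⟨hT, hpriv⟩
      obtain ⟨W, hW, hTW⟩ :=
        exists_isBlock_superset_of_not_hasPrivateSubset hk2 hunif hci hT hpriv
      obtain ⟨i, rfl⟩ := (hV W).1 (mem_filter.2 ⟨mem_univ _, hW⟩)
      exact ⟨i, hTW, hunif T hT⟩
    · rintro ⟨i, hTV, hT⟩
      exact ⟨(hVblock i).2 (mem_powersetCard.2 ⟨hTV, hT⟩),
        (hVblock i).not_hasPrivateSubset (by omega) hTV hT⟩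
end

section
/- Let k ≥ d ≥ 3 be integers and let F be a (d, 2k+d−3)-conditionally intersecting family of k-element subsets of [n]. Suppose B = {b_1, …, b_k} ∈ F and C_1, …, C_k are k distinct members of F, each different from B, such that B ∩ C_i = B − {b_i} for every i ∈ {1,…,k}. Let V = B ∪ C_1 ∪ ⋯ ∪ C_k. Then every member F of F satisfies: F ∩ V is either empty or has size at least d. -/
open Finset Function

namespace Finset

variable {α ι : Type*} [DecidableEq α]

theorem exists_notMem_eq_insert_erase {B C : Finset α} {b : α} (hb : b ∈ B)
    (hcard : C.card = B.card) (h : B ∩ C = B.erase b) :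
    ∃ x ∉ B, C = insert x (B.erase b) := by
  have hCB : (C \ B).card = 1 := by
    have := card_sdiff_add_card_inter C B
    rw [inter_comm, h, card_erase_of_mem hb, hcard] at this
    have := card_pos.2 ⟨b, hb⟩
    omega
  obtain ⟨x, hx⟩ := card_eq_one.1 hCB
  refine ⟨x, (mem_sdiff.1 (hx ▸ mem_singleton_self x)).2, ?_⟩
  rw [← sdiff_union_inter C B, hx, inter_comm, h, insert_eq]

theorem card_add_card_inter_le_of_subset_union {D S B : Finset α} {c : ι → α} {J : Finset ι}
    (h : D ⊆ S ∪ (B ∪ J.image c)) :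
    D.card + (S ∩ (B ∪ J.image c)).card ≤ S.card + B.card + J.card := by
  have := card_union_add_card_inter S (B ∪ J.image c)
  have := card_le_card h
  have := card_union_le B (J.image c)
  have := card_image_le (s := J) (f := c)
  omega

end Finset

theorem CondIntersecting.lt_card_sup {n d s : ℕ} {F D : Finset (Finset (Fin n))}
    (hF : CondIntersecting d s F) (hDF : D ⊆ F) (hD : D.card = d) (hinf : D.inf id = ∅) :
    s < (D.sup id).card :=
  lt_of_not_ge fun hs => hF ⟨D, hDF, hD, hs, hinf⟩

/-- The hypotheses of the theorem, with `B ∩ C i = B - b i` recast as `C i = B - b i + c i`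
(`Finset.exists_notMem_eq_insert_erase`). -/
structure IsExchangeStar {α ι : Type*} [DecidableEq α] [Fintype ι] (F : Finset (Finset α))
    (B : Finset α) (b c : ι → α) (C : ι → Finset α) : Prop where
  mem : B ∈ F
  apply_mem : ∀ i, C i ∈ F
  injective : Injective C
  apply_ne : ∀ i, C i ≠ B
  injective_b : Injective b
  eq_image : B = univ.image b
  c_notMem : ∀ i, c i ∉ B
  eq_insert_erase : ∀ i, C i = insert (c i) (B.erase (b i))

namespace IsExchangeStar

section

variable {α ι : Type*} [DecidableEq α] [Fintype ι] {F : Finset (Finset α)} {B S : Finset α}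
  {b c : ι → α} {C : ι → Finset α}

theorem b_mem (h : IsExchangeStar F B b c C) (i : ι) : b i ∈ B :=
  h.eq_image ▸ mem_image_of_mem b (mem_univ i)

theorem c_mem (h : IsExchangeStar F B b c C) (i : ι) : c i ∈ C i :=
  h.eq_insert_erase i ▸ mem_insert_self _ _

theorem b_notMem (h : IsExchangeStar F B b c C) (i : ι) : b i ∉ C i := by
  rw [h.eq_insert_erase i, mem_insert, not_or]
  exact ⟨fun hb => h.c_notMem i (hb ▸ h.b_mem i), notMem_erase _ _⟩

theorem apply_subset_insert (h : IsExchangeStar F B b c C) (i : ι) : C i ⊆ insert (c i) B :=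
  h.eq_insert_erase i ▸ insert_subset_insert _ (erase_subset _ _)

theorem union_sup_eq_union_image (h : IsExchangeStar F B b c C) (J : Finset ι) :
    B ∪ J.sup C = B ∪ J.image c := by
  refine Subset.antisymm (union_subset subset_union_left (Finset.sup_le fun i hi x hx => ?_))
    (union_subset_union subset_rfl fun x hx => ?_)
  · rcases mem_insert.1 (h.apply_subset_insert i hx) with rfl | hxB
    · exact mem_union_right _ (mem_image_of_mem c hi)
    · exact mem_union_left _ hxB
  · obtain ⟨i, hi, rfl⟩ := mem_image.1 hx
    exact le_sup (f := C) hi (h.c_mem i)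

theorem card_eq (h : IsExchangeStar F B b c C) : B.card = Fintype.card ι := by
  rw [h.eq_image, card_image_of_injective _ h.injective_b, card_univ]

theorem card_filter_mem (h : IsExchangeStar F B b c C) (S : Finset α) :
    (univ.filter (b · ∈ S)).card = (S ∩ B).card := by
  rw [← card_image_of_injective _ h.injective_b, h.eq_image]
  congr 1
  ext x
  simp only [mem_image, mem_filter, mem_univ, true_and, mem_inter]
  grind

theorem inter_inter_inf_eq_empty [Fintype α] (h : IsExchangeStar F B b c C) {J : Finset ι}
    (hJ : ∀ i, b i ∈ S → i ∈ J) : S ∩ (B ∩ J.inf C) = ∅ := by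
  refine eq_empty_of_forall_notMem fun x hx => ?_
  simp only [mem_inter, mem_inf] at hx
  obtain ⟨hxS, hxB, hxC⟩ := hx
  rw [h.eq_image] at hxB
  obtain ⟨i, -, rfl⟩ := mem_image.1 hxB
  exact h.b_notMem i (hxC i (hJ i hxS))

theorem exists_card_eq_inter_union_image_nonempty (h : IsExchangeStar F B b c C) {m : ℕ}
    (hm : 1 ≤ m) (hmι : m ≤ Fintype.card ι) (hSB : (S ∩ B).card ≤ m)
    (hne : (S ∩ (B ∪ univ.image c)).Nonempty) :
    ∃ J : Finset ι, (∀ i, b i ∈ S → i ∈ J) ∧ J.card = m ∧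
      (S ∩ (B ∪ J.image c)).Nonempty := by
  obtain ⟨J₀, hJ₀, hJ₀m, hJ₀S⟩ : ∃ J₀ : Finset ι, (∀ i, b i ∈ S → i ∈ J₀) ∧
      J₀.card ≤ m ∧ (S ∩ (B ∪ J₀.image c)).Nonempty := by
    rcases (S ∩ B).eq_empty_or_nonempty with hSB₀ | hSB₀
    · obtain ⟨x, hx⟩ := hne
      rw [inter_union_distrib_left, hSB₀, empty_union] at hx
      obtain ⟨hxS, hxc⟩ := mem_inter.1 hx
      obtain ⟨i, -, rfl⟩ := mem_image.1 hxc
      refine ⟨{i}, fun j hj => ?_, by simpa using hm, c i, by simp [hxS]⟩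
      exact absurd (mem_inter.2 ⟨hj, h.b_mem j⟩) (by simp [hSB₀])
    · exact ⟨univ.filter (b · ∈ S), by simp, (h.card_filter_mem S).le.trans hSB,
        hSB₀.mono (inter_subset_inter_left subset_union_left)⟩
  obtain ⟨J, hJ₀J, -, hJ⟩ :=
    exists_subsuperset_card_eq (subset_univ J₀) hJ₀m (by simpa using hmι)
  exact ⟨J, fun i hi => hJ₀J (hJ₀ i hi), hJ,
    hJ₀S.mono (inter_subset_inter_left (union_subset_union_right (image_subset_image hJ₀J)))⟩

end

variable {n : ℕ} {ι : Type*} [Fintype ι] {k d : ℕ} {F : Finset (Finset (Fin n))}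
  {B S : Finset (Fin n)} {b c : ι → Fin n} {C : ι → Finset (Fin n)}

theorem false_of_subset (h : IsExchangeStar F B b c C) (hunif : ∀ S ∈ F, S.card = k)
    (hci : CondIntersecting d (2 * k + d - 3) F) (hS : S ∈ F) {J : Finset ι}
    {D : Finset (Finset (Fin n))} (hDS : D ⊆ insert S (insert B (J.image C))) (hD : D.card = d)
    (hinf : D.inf id = ∅) (hJ : J.card + 3 ≤ (S ∩ (B ∪ J.image c)).card + d) : False := by
  have hsup : D.sup id ⊆ S ∪ (B ∪ J.image c) :=
    calc D.sup id ⊆ (insert S (insert B (J.image C))).sup id := sup_mono hDS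
      _ = S ∪ (B ∪ J.sup C) := by simp only [sup_insert, sup_image, id_comp, id_eq, sup_eq_union]
      _ = S ∪ (B ∪ J.image c) := by rw [h.union_sup_eq_union_image]
  have hDF : D ⊆ F := hDS.trans <|
    insert_subset hS (insert_subset h.mem (image_subset_iff.2 fun i _ => h.apply_mem i))
  have hlt := hci.lt_card_sup hDF hD hinf
  have hle := card_add_card_inter_le_of_subset_union hsup
  rw [hunif S hS, hunif B h.mem] at hle
  omega

theorem false_of_card_inter_add_one_lt (h : IsExchangeStar F B b c C)
    (hunif : ∀ S ∈ F, S.card = k) (hci : CondIntersecting d (2 * k + d - 3) F) (hd : 3 ≤ d)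
    (hdk : d ≤ k) (hS : S ∈ F) (hne : (S ∩ (B ∪ univ.image c)).Nonempty)
    (hlt : (S ∩ (B ∪ univ.image c)).card < d) (hSB : (S ∩ B).card + 1 < d) : False := by
  have hSV : ¬ S ⊆ B ∪ univ.image c := fun hsub => by
    rw [inter_eq_left.2 hsub, hunif S hS] at hlt
    omega
  have hSneB : S ≠ B := fun he => hSV (he ▸ subset_union_left)
  have hSneC (i : ι) : S ≠ C i := fun he => hSV <| he ▸ (h.apply_subset_insert i).trans
    (insert_subset (mem_union_right _ (mem_image_of_mem c (mem_univ i))) subset_union_left)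
  obtain ⟨J, hJ, hJd, hJS⟩ := h.exists_card_eq_inter_union_image_nonempty (m := d - 2)
    (by omega) (by rw [← h.card_eq, hunif B h.mem]; omega) (by omega) hne
  refine h.false_of_subset hunif hci hS (J := J) subset_rfl ?_ ?_
    (by have := hJS.card_pos; omega)
  · have hSJ : S ∉ J.image C := fun hmem => by
      obtain ⟨i, -, hi⟩ := mem_image.1 hmem
      exact hSneC i hi.symm
    have hBJ : B ∉ J.image C := fun hmem => by
      obtain ⟨i, -, hi⟩ := mem_image.1 hmem
      exact h.apply_ne i hi
    rw [card_insert_of_notMem (mem_insert.not.2 (not_or.2 ⟨hSneB, hSJ⟩)),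
      card_insert_of_notMem hBJ, card_image_of_injective _ h.injective]
    omega
  · simp only [inf_insert, inf_image, id_comp]
    exact h.inter_inter_inf_eq_empty hJ

theorem false_of_le_card_inter_add_one (h : IsExchangeStar F B b c C)
    (hunif : ∀ S ∈ F, S.card = k) (hci : CondIntersecting d (2 * k + d - 3) F) (hd : 3 ≤ d)
    (hS : S ∈ F) (hlt : (S ∩ (B ∪ univ.image c)).card < d) (hSB : d ≤ (S ∩ B).card + 1) :
    False := by
  have hSBV : S ∩ B = S ∩ (B ∪ univ.image c) :=
    eq_of_subset_of_card_le (inter_subset_inter_left subset_union_left) (by omega)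
  have hSBd : (S ∩ B).card < d := hSBV ▸ hlt
  have hcS (i : ι) : c i ∉ S := fun hi => h.c_notMem i <| (mem_inter.1 (hSBV ▸ mem_inter.2
    ⟨hi, mem_union_right _ (mem_image_of_mem c (mem_univ i))⟩)).2
  set J := univ.filter (b · ∈ S) with hJdef
  have hJ : J.card = (S ∩ B).card := h.card_filter_mem S
  obtain ⟨j, hj⟩ := card_pos.1 (show 0 < J.card by omega)
  have hSJ : S ∉ J.image C := fun hmem => by
    obtain ⟨i, -, hi⟩ := mem_image.1 hmem
    exact hcS i (hi ▸ h.c_mem i)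
  have hSJB : S ∩ J.inf C ⊆ B := fun x hx => by
    obtain ⟨hxS, hxC⟩ := mem_inter.1 hx
    rcases mem_insert.1 (h.apply_subset_insert j (mem_inf.1 hxC j hj)) with rfl | hxB
    · exact absurd hxS (hcS j)
    · exact hxB
  refine h.false_of_subset hunif hci hS (J := J)
    (insert_subset_insert _ (subset_insert _ _)) ?_ ?_ ?_
  · rw [card_insert_of_notMem hSJ, card_image_of_injective _ h.injective]
    omega
  · simp only [inf_insert, inf_image, id_comp]
    have hsub : S ∩ J.inf C ⊆ S ∩ (B ∩ J.inf C) :=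
      subset_inter inter_subset_left (subset_inter hSJB inter_subset_right)
    exact subset_empty.1 (hsub.trans (h.inter_inter_inf_eq_empty (by simp [hJdef])).le)
  · have : (S ∩ B).card ≤ (S ∩ (B ∪ J.image c)).card :=
      card_le_card (inter_subset_inter_left subset_union_left)
    omega

end IsExchangeStar

theorem stmt5 (n k d : ℕ) (hd : 3 ≤ d) (hdk : d ≤ k)
    (F : Finset (Finset (Fin n))) (hunif : ∀ S ∈ F, S.card = k)
    (hci : CondIntersecting d (2 * k + d - 3) F)
    (B : Finset (Fin n)) (hB : B ∈ F)
    (b : Fin k → Fin n) (hbinj : Function.Injective b)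
    (hBb : B = Finset.image b Finset.univ)
    (C : Fin k → Finset (Fin n)) (hCinj : Function.Injective C)
    (hCF : ∀ i, C i ∈ F) (hCB : ∀ i, C i ≠ B)
    (hBC : ∀ i, B ∩ C i = B.erase (b i)) :
    ∀ S ∈ F, S ∩ (B ∪ Finset.univ.sup C) = ∅ ∨ d ≤ (S ∩ (B ∪ Finset.univ.sup C)).card := by
  have hbB (i : Fin k) : b i ∈ B := hBb ▸ mem_image_of_mem b (mem_univ i)
  choose c hcB hCc using fun i => exists_notMem_eq_insert_erase (hbB i)
    ((hunif _ (hCF i)).trans (hunif B hB).symm) (hBC i)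
  have h : IsExchangeStar F B b c C := ⟨hB, hCF, hCinj, hCB, hbinj, hBb, hcB, hCc⟩
  intro S hS
  rw [h.union_sup_eq_union_image]
  by_contra! hSV
  rcases lt_or_ge ((S ∩ B).card + 1) d with hSB | hSB
  · exact h.false_of_card_inter_add_one_lt hunif hci hd hdk hS hSV.1 hSV.2 hSB
  · exact h.false_of_le_card_inter_add_one hunif hci hd hS hSV.2 hSB
end

section
/- Let H be a family of k-element subsets of [n] such that every member H of H contains a (k−1)-element subset G(H) that is contained in no other member of H. Then n·|H| ≤ (n−k+1)·|∂H|, where ∂H denotes the shadow of H. -/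
/-- The shadow of a family `𝓗` of `k`-element subsets of `Fin n`: all `(k-1)`-element
subsets of `Fin n` that are contained in at least one member of `𝓗`. -/
def shadowFam {n : ℕ} (k : ℕ) (𝓗 : Finset (Finset (Fin n))) : Finset (Finset (Fin n)) :=
  ((Finset.univ : Finset (Fin n)).powersetCard (k - 1)).filter (fun G => ∃ H ∈ 𝓗, G ⊆ H)

/-!
Count the incidences `t ⊆ s` between `s ∈ 𝓗` and `t ∈ ∂𝓗`. Every `s` has exactly `k` subsets in
the shadow, every `t ∈ ∂𝓗` lies in at most `n - k + 1` members, and the `|𝓗|` distinct unique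
subsets lie in exactly one. Hence
`k |𝓗| ≤ |𝓗| + (n - k + 1) (|∂𝓗| - |𝓗|)`, which rearranges to `n |𝓗| ≤ (n - k + 1) |∂𝓗|`.
-/

open Finset
open scoped FinsetFamily

namespace Finset

lemma sum_add_card_mul_le_card_mul {ι : Type*} {S U : Finset ι} {d : ι → ℕ} {m : ℕ}
    (hUS : U ⊆ S) (hd : ∀ t ∈ S, d t ≤ m) (hU : ∀ t ∈ U, d t = 1) :
    ∑ t ∈ S, d t + #U * (m - 1) ≤ #S * m := by
  classical
  calc ∑ t ∈ S, d t + #U * (m - 1)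
      = ∑ t ∈ S, (d t + if t ∈ U then m - 1 else 0) := by
        rw [sum_add_distrib, sum_ite_mem, inter_eq_right.2 hUS, sum_const, smul_eq_mul]
    _ ≤ ∑ _t ∈ S, m := by
        refine sum_le_sum fun t ht => ?_
        split_ifs with htU
        · have := hd t ht
          have := hU t htU
          omega
        · simpa only [add_zero] using hd t ht
    _ = #S * m := by rw [sum_const, smul_eq_mul]

variable {α : Type*} [DecidableEq α] {𝒜 : Finset (Finset α)} {r : ℕ} {s t : Finset α}

lemma card_shadow_bipartiteBelow_subset (h𝒜 : (𝒜 : Set (Finset α)).Sized (r + 1))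
    (hs : s ∈ 𝒜) : #((∂ 𝒜).bipartiteBelow (· ⊆ ·) s) = r + 1 := by
  have : (∂ 𝒜).bipartiteBelow (· ⊆ ·) s = s.powersetCard r := by
    ext t
    rw [mem_bipartiteBelow, mem_powersetCard]
    refine ⟨fun ⟨ht, hts⟩ => ⟨hts, h𝒜.shadow ht⟩, fun ⟨hts, ht⟩ => ⟨?_, hts⟩⟩
    exact mem_shadow_iff_exists_mem_card_add_one.2 ⟨s, hs, hts, by rw [h𝒜 hs, ht]⟩
  rw [this, card_powersetCard, h𝒜 hs, Nat.choose_succ_self_right]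

lemma card_bipartiteAbove_subset_le [Fintype α] (h𝒜 : (𝒜 : Set (Finset α)).Sized (r + 1))
    (ht : #t = r) : #(𝒜.bipartiteAbove (· ⊆ ·) t) ≤ Fintype.card α - r := by
  calc #(𝒜.bipartiteAbove (· ⊆ ·) t) ≤ #(tᶜ.image (insert · t)) := by
        refine card_le_card fun s hs => ?_
        rw [mem_bipartiteAbove] at hs
        obtain ⟨a, ha, rfl⟩ := exists_eq_insert_iff.2 ⟨hs.2, by rw [ht, h𝒜 hs.1]⟩
        exact mem_image_of_mem _ (mem_compl.2 ha)
    _ ≤ #tᶜ := card_image_le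
    _ = Fintype.card α - r := by rw [card_compl, ht]

lemma bipartiteAbove_subset_eq_singleton (hs : s ∈ 𝒜) (hts : t ⊆ s)
    (huniq : ∀ u ∈ 𝒜, t ⊆ u → u = s) : 𝒜.bipartiteAbove (· ⊆ ·) t = {s} := by
  ext u
  rw [mem_bipartiteAbove, mem_singleton]
  exact ⟨fun ⟨hu, htu⟩ => huniq u hu htu, fun hu => hu ▸ ⟨hs, hts⟩⟩

theorem card_mul_le_card_shadow_mul_of_forall_exists_unique_subset [Fintype α]
    (h𝒜 : (𝒜 : Set (Finset α)).Sized (r + 1))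
    (huniq : ∀ s ∈ 𝒜, ∃ t ⊆ s, #t = r ∧ ∀ u ∈ 𝒜, t ⊆ u → u = s) :
    Fintype.card α * #𝒜 ≤ (Fintype.card α - r) * #(∂ 𝒜) := by
  obtain rfl | ⟨s₀, hs₀⟩ := 𝒜.eq_empty_or_nonempty
  · simp
  have hr : r + 1 ≤ Fintype.card α := h𝒜 hs₀ ▸ card_le_univ s₀
  choose! f hf_sub hf_card hf_uniq using huniq
  have hU_card : #(𝒜.image f) = #𝒜 :=
    card_image_of_injOn fun s hs s' hs' h => hf_uniq s' hs' s hs (h ▸ hf_sub s hs)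
  have hU_shadow : 𝒜.image f ⊆ ∂ 𝒜 := image_subset_iff.2 fun s hs =>
    mem_shadow_iff_exists_mem_card_add_one.2 ⟨s, hs, hf_sub s hs, by rw [h𝒜 hs, hf_card s hs]⟩
  have hdouble : ∑ t ∈ ∂ 𝒜, #(𝒜.bipartiteAbove (· ⊆ ·) t) = #𝒜 * (r + 1) := by
    rw [sum_card_bipartiteAbove_eq_sum_card_bipartiteBelow,
      sum_const_nat fun s hs => card_shadow_bipartiteBelow_subset h𝒜 hs]
  have key := sum_add_card_mul_le_card_mul hU_shadow
    (fun t ht => card_bipartiteAbove_subset_le h𝒜 (h𝒜.shadow ht))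
    (forall_mem_image.2 fun s hs => by
      rw [bipartiteAbove_subset_eq_singleton hs (hf_sub s hs) (hf_uniq s hs), card_singleton])
  rw [hdouble, hU_card] at key
  obtain ⟨m, hm⟩ := Nat.exists_eq_add_of_le hr
  have hsub : r + 1 + m - r = m + 1 := by omega
  rw [hm, hsub, Nat.add_sub_cancel] at key
  rw [hm, hsub]
  linarith

end Finset

lemma shadowFam_eq_shadow {n r : ℕ} {𝓗 : Finset (Finset (Fin n))}
    (h𝓗 : (𝓗 : Set (Finset (Fin n))).Sized (r + 1)) : shadowFam (r + 1) 𝓗 = ∂ 𝓗 := by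
  ext G
  simp only [shadowFam, mem_filter, mem_powersetCard, Nat.add_sub_cancel,
    mem_shadow_iff_exists_mem_card_add_one]
  constructor
  · rintro ⟨⟨-, hG⟩, H, hH, hGH⟩
    exact ⟨H, hH, hGH, by rw [h𝓗 hH, hG]⟩
  · rintro ⟨H, hH, hGH, hcard⟩
    exact ⟨⟨subset_univ G, by rw [h𝓗 hH] at hcard; omega⟩, H, hH, hGH⟩

/-- Since `0 - 1 = 0` in `ℕ`, this is `𝓗 ⊆ {∅}` itself rather than the shadow `∂ 𝓗 = ∅`. -/
lemma shadowFam_zero_eq_self {n : ℕ} {𝓗 : Finset (Finset (Fin n))}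
    (h𝓗 : ∀ H ∈ 𝓗, H.card = 0) : shadowFam 0 𝓗 = 𝓗 := by
  ext G
  simp only [shadowFam, mem_filter, mem_powersetCard, Nat.zero_sub, card_eq_zero]
  constructor
  · rintro ⟨⟨-, rfl⟩, H, hH, hGH⟩
    rwa [← card_eq_zero.1 (h𝓗 H hH)]
  · intro hG
    exact ⟨⟨subset_univ G, card_eq_zero.1 (h𝓗 G hG)⟩, G, hG, subset_rfl⟩

theorem stmt6 (n k : ℕ)
    (𝓗 : Finset (Finset (Fin n))) (hunif : ∀ H ∈ 𝓗, H.card = k)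
    (huniq : ∀ H ∈ 𝓗, ∃ G ⊆ H, G.card = k - 1 ∧ ∀ T ∈ 𝓗, G ⊆ T → T = H) :
    n * 𝓗.card ≤ (n - k + 1) * (shadowFam k 𝓗).card := by
  rcases k with _ | r
  · rw [shadowFam_zero_eq_self hunif]
    exact Nat.mul_le_mul_right _ (by omega)
  · have h𝓗 : (𝓗 : Set (Finset (Fin n))).Sized (r + 1) := hunif
    simp only [Nat.add_sub_cancel] at huniq
    rw [shadowFam_eq_shadow h𝓗]
    calc n * #𝓗 ≤ (n - r) * #(∂ 𝓗) := by
          simpa only [Fintype.card_fin] using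
            card_mul_le_card_shadow_mul_of_forall_exists_unique_subset h𝓗 huniq
      _ ≤ (n - (r + 1) + 1) * #(∂ 𝓗) := Nat.mul_le_mul_right _ (by omega)
end

section
/- Let k ≥ 3 be an integer and let F be a (k, 2k)-conditionally intersecting family of k-element subsets of [n]. Suppose B = {b_1, …, b_k} ∈ F and C_1, …, C_k are k distinct members of F, each different from B, such that B ∩ C_i = B − {b_i} for every i ∈ {1,…,k}. Let V = B ∪ C_1 ∪ ⋯ ∪ C_k. Then |V| = k+1, the family {B, C_1, …, C_k} equals the family of all k-element subsets of V, and every member of F other than B, C_1, …, C_k is disjoint from V. -/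
open Finset

theorem CondIntersecting.inf_nonempty {n d s : ℕ} {F : Finset (Finset (Fin n))}
    (hci : CondIntersecting d s F) {D : Finset (Finset (Fin n))} (hDF : D ⊆ F) (hD : D.card = d)
    (hDs : (D.sup id).card ≤ s) : (D.inf id).Nonempty :=
  nonempty_iff_ne_empty.mpr fun hinf => hci ⟨D, hDF, hD, hDs, hinf⟩

theorem exists_eq_insert_erase_of_inter_eq_erase {α : Type*} [DecidableEq α] {B C : Finset α}
    {x : α} (hx : x ∈ B) (hCB : C.card = B.card) (hBC : B ∩ C = B.erase x) :
    ∃ c ∉ B, C = insert c (B.erase x) := by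
  have hnew : (C \ B).card = 1 := by
    have := card_sdiff_add_card_inter C B
    rw [inter_comm, hBC, card_erase_of_mem hx] at this
    have := card_pos.mpr ⟨x, hx⟩
    omega
  obtain ⟨c, hc⟩ := card_eq_one.mp hnew
  refine ⟨c, (mem_sdiff.mp (hc ▸ mem_singleton_self c)).2, ?_⟩
  rw [insert_eq, ← hc, ← hBC, inter_comm, sdiff_union_inter]

theorem CondIntersecting.eq_of_forall_eq_insert_erase {n k : ℕ} {F : Finset (Finset (Fin n))}
    (hci : CondIntersecting k (2 * k) F) {B : Finset (Fin n)} (hBk : B.card ≤ k)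
    {b : Fin k → Fin n} (hBb : B = image b univ) {C : Fin k → Finset (Fin n)}
    (hCinj : Function.Injective C) (hCF : ∀ i, C i ∈ F) {c : Fin k → Fin n}
    (hcB : ∀ i, c i ∉ B) (hC : ∀ i, C i = insert (c i) (B.erase (b i))) (i j : Fin k) :
    c i = c j := by
  by_contra hne
  have hsup : univ.sup C ⊆ B ∪ image c univ := Finset.sup_le fun l _ => by
    rw [hC l]
    exact insert_subset (mem_union_right _ (mem_image_of_mem c (mem_univ l)))
      ((erase_subset _ _).trans subset_union_left)
  obtain ⟨x, hx⟩ := hci.inf_nonempty (D := image C univ)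
    (image_subset_iff.mpr fun l _ => hCF l)
    (by rw [card_image_of_injective _ hCinj, card_univ, Fintype.card_fin])
    (by
      rw [sup_image, Function.id_comp]
      calc (univ.sup C).card ≤ (B ∪ image c univ).card := card_le_card hsup
        _ ≤ B.card + (image c univ).card := card_union_le _ _
        _ ≤ k + k := add_le_add hBk (card_image_le.trans (by simp))
        _ = 2 * k := (two_mul k).symm)
  rw [inf_image, Function.id_comp, mem_inf] at hx
  have hxC : ∀ l, x = c l ∨ x ≠ b l ∧ x ∈ B := fun l => by
    simpa only [hC l, mem_insert, mem_erase] using hx l (mem_univ l)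
  by_cases hxB : x ∈ B
  · obtain ⟨m, -, rfl⟩ := mem_image.mp (hBb ▸ hxB)
    rcases hxC m with h | h
    · exact hcB m (h ▸ hxB)
    · exact h.1 rfl
  · have hxc : ∀ l, x = c l := fun l => (hxC l).resolve_right fun h => hxB h.2
    exact hne ((hxc i).symm.trans (hxc j))

theorem CondIntersecting.exists_eq_insert_erase {n k : ℕ} {F : Finset (Finset (Fin n))}
    (hci : CondIntersecting k (2 * k) F) (hk : 0 < k) {B : Finset (Fin n)} (hBk : B.card = k)
    {b : Fin k → Fin n} (hBb : B = image b univ) {C : Fin k → Finset (Fin n)}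
    (hCinj : Function.Injective C) (hCF : ∀ i, C i ∈ F) (hCk : ∀ i, (C i).card = k)
    (hBC : ∀ i, B ∩ C i = B.erase (b i)) :
    ∃ c ∉ B, ∀ i, C i = insert c (B.erase (b i)) := by
  have hbB : ∀ i, b i ∈ B := fun i => hBb ▸ mem_image_of_mem b (mem_univ i)
  choose c hcB hC using fun i =>
    exists_eq_insert_erase_of_inter_eq_erase (hbB i) ((hCk i).trans hBk.symm) (hBC i)
  refine ⟨c ⟨0, hk⟩, hcB _, fun i => ?_⟩
  rw [hC i, hci.eq_of_forall_eq_insert_erase hBk.le hBb hCinj hCF hcB hC i ⟨0, hk⟩]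

theorem Finset.eq_powersetCard_of_card_le {α : Type*} {V : Finset α} {G : Finset (Finset α)}
    {k : ℕ} (hV : V.card = k + 1) (hG : G ⊆ V.powersetCard k) (hGk : k + 1 ≤ G.card) :
    G = V.powersetCard k :=
  eq_of_subset_of_card_le hG (by rwa [card_powersetCard, hV, Nat.choose_succ_self_right])

theorem Finset.inf_insert_image_erase_eq_empty {α : Type*} [Fintype α] [DecidableEq α]
    {S T V : Finset α} (hT : T.Nonempty) (hSVT : S ∩ V ⊆ T) :
    (insert S (T.image V.erase)).inf id = ∅ := by
  refine eq_empty_iff_forall_notMem.mpr fun y hy => ?_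
  rw [mem_inf, forall_mem_insert, forall_mem_image] at hy
  obtain ⟨hyS, hyT⟩ := hy
  obtain ⟨w, hw⟩ := hT
  have hyV : y ∈ V := mem_of_mem_erase (hyT hw)
  exact (mem_erase.mp (hyT (hSVT (mem_inter.mpr ⟨hyS, hyV⟩)))).1 rfl

theorem CondIntersecting.card_sdiff_le_one {n k : ℕ} {F : Finset (Finset (Fin n))}
    (hci : CondIntersecting k (2 * k) F) (hk : 2 ≤ k) {V : Finset (Fin n)} (hV : V.card = k + 1)
    (hVF : V.powersetCard k ⊆ F) {S : Finset (Fin n)} (hS : S ∈ F) (hSk : S.card = k)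
    (hSV : (S ∩ V).Nonempty) : (V \ S).card ≤ 1 := by
  by_contra! hmiss
  obtain ⟨u, hu, v, hv, huv⟩ := one_lt_card.mp hmiss
  rw [mem_sdiff] at hu hv
  set T := V \ {u, v}
  have hT : T.card = k - 1 := by
    rw [card_sdiff_of_subset (insert_subset hu.1 (singleton_subset_iff.mpr hv.1)), hV,
      card_pair huv]
    omega
  have hTF : T.image V.erase ⊆ F := image_subset_iff.mpr fun w hw => hVF <|
    mem_powersetCard.mpr ⟨erase_subset _ _, by rw [card_erase_of_mem (mem_sdiff.mp hw).1, hV]; rfl⟩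
  have hSnotin : S ∉ T.image V.erase := fun h => by
    obtain ⟨w, hw, rfl⟩ := mem_image.mp h
    have hwu : u ≠ w := fun h => (mem_sdiff.mp hw).2 (h ▸ mem_insert_self u {v})
    exact hu.2 (mem_erase.mpr ⟨hwu, hu.1⟩)
  have hcard : (insert S (T.image V.erase)).card = k := by
    rw [card_insert_of_notMem hSnotin,
      card_image_of_injOn ((erase_injOn V).mono (coe_subset.mpr sdiff_subset)), hT]
    omega
  have hsup : ((insert S (T.image V.erase)).sup id).card ≤ 2 * k := by
    have hsub : (insert S (T.image V.erase)).sup id ⊆ S ∪ V := Finset.sup_le fun A hA => by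
      rcases mem_insert.mp hA with rfl | hA
      · exact subset_union_left
      · obtain ⟨w, -, rfl⟩ := mem_image.mp hA
        exact (erase_subset _ _).trans subset_union_right
    have := card_union_add_card_inter S V
    have := card_le_card hsub
    have := card_pos.mpr hSV
    omega
  have hSVT : S ∩ V ⊆ T := fun y hy => by
    rw [mem_inter] at hy
    simp only [T, mem_sdiff, mem_insert, mem_singleton, not_or]
    exact ⟨hy.2, fun h => hu.2 (h ▸ hy.1), fun h => hv.2 (h ▸ hy.1)⟩
  exact (hci.inf_nonempty (insert_subset hS hTF) hcard hsup).ne_empty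
    (inf_insert_image_erase_eq_empty (card_pos.mp (by omega)) hSVT)

theorem CondIntersecting.disjoint_of_powersetCard_subset {n k : ℕ}
    {F : Finset (Finset (Fin n))} (hci : CondIntersecting k (2 * k) F) (hk : 2 ≤ k)
    {V : Finset (Fin n)} (hV : V.card = k + 1) (hVF : V.powersetCard k ⊆ F)
    {S : Finset (Fin n)} (hS : S ∈ F) (hSk : S.card = k) (hSV : ¬ S ⊆ V) : Disjoint S V := by
  rw [disjoint_iff_inter_eq_empty, ← not_nonempty_iff_eq_empty]
  intro hmeet
  have hmiss := hci.card_sdiff_le_one hk hV hVF hS hSk hmeet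
  have hSV' : S ∩ V = S := by
    refine eq_of_subset_of_card_le inter_subset_left ?_
    have := card_sdiff_add_card_inter V S
    rw [inter_comm] at this
    omega
  exact hSV (hSV' ▸ inter_subset_right)

theorem stmt7_general (n k : ℕ) (hk : 3 ≤ k)
    (F : Finset (Finset (Fin n))) (hunif : ∀ S ∈ F, S.card = k)
    (hci : CondIntersecting k (2 * k) F)
    (B : Finset (Fin n)) (hB : B ∈ F)
    (b : Fin k → Fin n)
    (hBb : B = Finset.image b Finset.univ)
    (C : Fin k → Finset (Fin n)) (hCinj : Function.Injective C)
    (hCF : ∀ i, C i ∈ F) (hCB : ∀ i, C i ≠ B)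
    (hBC : ∀ i, B ∩ C i = B.erase (b i)) :
    (B ∪ Finset.univ.sup C).card = k + 1 ∧
    insert B (Finset.image C Finset.univ) = (B ∪ Finset.univ.sup C).powersetCard k ∧
    ∀ S ∈ F, S ≠ B → (∀ i, S ≠ C i) → Disjoint S (B ∪ Finset.univ.sup C) := by
  have hBk : B.card = k := hunif B hB
  obtain ⟨c, hcB, hC⟩ := hci.exists_eq_insert_erase (by omega) hBk hBb hCinj hCF
    (fun i => hunif _ (hCF i)) hBC
  have hCV : ∀ i, C i ⊆ insert c B := fun i =>
    hC i ▸ insert_subset_insert c (erase_subset _ _)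
  have hV : B ∪ univ.sup C = insert c B := by
    refine subset_antisymm (union_subset (subset_insert c B) (Finset.sup_le fun i _ => hCV i)) ?_
    have hc : c ∈ univ.sup C := mem_sup.mpr ⟨⟨0, by omega⟩, mem_univ _, hC _ ▸ mem_insert_self _ _⟩
    exact insert_subset (mem_union_right _ hc) subset_union_left
  have hVk : (insert c B).card = k + 1 := by rw [card_insert_of_notMem hcB, hBk]
  have hpow : insert B (image C univ) = (insert c B).powersetCard k := by
    refine eq_powersetCard_of_card_le hVk (insert_subset ?_ ?_) ?_
    · exact mem_powersetCard.mpr ⟨subset_insert c B, hBk⟩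
    · exact image_subset_iff.mpr fun i _ => mem_powersetCard.mpr ⟨hCV i, hunif _ (hCF i)⟩
    · rw [card_insert_of_notMem (by simpa using hCB), card_image_of_injective _ hCinj,
        card_univ, Fintype.card_fin]
  refine ⟨hV ▸ hVk, hV ▸ hpow, fun S hS hSB hSC => hV ▸ ?_⟩
  refine hci.disjoint_of_powersetCard_subset (by omega) hVk (hpow ▸ insert_subset hB
    (image_subset_iff.mpr fun i _ => hCF i)) hS (hunif S hS) fun hSV => ?_
  have := hpow ▸ mem_powersetCard.mpr ⟨hSV, hunif S hS⟩
  simp only [mem_insert, mem_image, mem_univ, true_and] at this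
  exact this.elim hSB fun ⟨i, hi⟩ => hSC i hi.symm

theorem stmt7 (n k : ℕ) (hk : 3 ≤ k)
    (F : Finset (Finset (Fin n))) (hunif : ∀ S ∈ F, S.card = k)
    (hci : CondIntersecting k (2 * k) F)
    (B : Finset (Fin n)) (hB : B ∈ F)
    (b : Fin k → Fin n) (hbinj : Function.Injective b)
    (hBb : B = Finset.image b Finset.univ)
    (C : Fin k → Finset (Fin n)) (hCinj : Function.Injective C)
    (hCF : ∀ i, C i ∈ F) (hCB : ∀ i, C i ≠ B)
    (hBC : ∀ i, B ∩ C i = B.erase (b i)) :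
    (B ∪ Finset.univ.sup C).card = k + 1 ∧
    insert B (Finset.image C Finset.univ) = (B ∪ Finset.univ.sup C).powersetCard k ∧
    ∀ S ∈ F, S ≠ B → (∀ i, S ≠ C i) → Disjoint S (B ∪ Finset.univ.sup C) :=
  stmt7_general n k hk F hunif hci B hB b hBb C hCinj hCF hCB hBC
end

section
/- Let k ≥ 3 be an integer, let F be a (3, 2k)-conditionally intersecting family of k-element subsets of [n], and let A, B ∈ F be disjoint. If F ∈ F satisfies |F ∩ (A ∪ B)| = 1, then the (k−1)-element set F − (A ∪ B) is contained in no member of F other than F. -/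
/-!
Say `S ∩ A = {x}` and `G ∈ F`, `G ≠ S`, contains `S \ {x}`. By uniformity `x ∉ G`, so `A`, `S`, `G`
are three distinct members whose union is `A ∪ G` (at most `2k` elements) and whose intersection
is `{x} ∩ G = ∅`, contradicting the `(3, 2k)`-condition.
-/

namespace CondIntersecting

variable {n : ℕ} {F : Finset (Finset (Fin n))}

theorem inter_inter_nonempty {s : ℕ} (hF : CondIntersecting 3 s F)
    {X Y Z : Finset (Fin n)} (hX : X ∈ F) (hY : Y ∈ F) (hZ : Z ∈ F)
    (hXY : X ≠ Y) (hXZ : X ≠ Z) (hYZ : Y ≠ Z) (hcard : (X ∪ Y ∪ Z).card ≤ s) :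
    (X ∩ Y ∩ Z).Nonempty := by
  rw [Finset.nonempty_iff_ne_empty]
  intro hempty
  refine hF ⟨{X, Y, Z}, ?_, Finset.card_eq_three.mpr ⟨X, Y, Z, hXY, hXZ, hYZ, rfl⟩, ?_, ?_⟩
  · simp only [Finset.insert_subset_iff, Finset.singleton_subset_iff]
    exact ⟨hX, hY, hZ⟩
  · simpa [Finset.union_assoc] using hcard
  · simpa [Finset.inter_assoc] using hempty

theorem eq_of_erase_subset {k : ℕ} (hk : 2 ≤ k) (hunif : ∀ S ∈ F, S.card = k)
    (hF : CondIntersecting 3 (2 * k) F) {C S G : Finset (Fin n)}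
    (hC : C ∈ F) (hS : S ∈ F) (hG : G ∈ F) {x : Fin n} (hSC : S ∩ C = {x})
    (hsub : S.erase x ⊆ G) : G = S := by
  by_contra hne
  have hxC : x ∈ C := (Finset.mem_inter.mp (hSC ▸ Finset.mem_singleton_self x)).2
  have hxG : x ∉ G := fun hxG =>
    hne (Finset.eq_of_subset_of_card_le (Finset.subset_insert_iff.mpr hsub |>.trans
      (Finset.insert_subset hxG subset_rfl)) (by rw [hunif G hG, hunif S hS])).symm
  have hCS : C ≠ S := by
    rintro rfl
    have := hunif C hC
    rw [Finset.inter_self] at hSC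
    rw [hSC, Finset.card_singleton] at this
    omega
  have hunion : C ∪ S ∪ G ⊆ C ∪ G := by
    have hS' : S ⊆ insert x G := Finset.subset_insert_iff.mpr hsub
    intro y hy
    simp only [Finset.mem_union] at hy ⊢
    rcases hy with (hy | hy) | hy
    · exact .inl hy
    · rcases Finset.mem_insert.mp (hS' hy) with rfl | hy
      · exact .inl hxC
      · exact .inr hy
    · exact .inr hy
  have hcard : (C ∪ S ∪ G).card ≤ 2 * k :=
    calc (C ∪ S ∪ G).card ≤ (C ∪ G).card := Finset.card_le_card hunion
      _ ≤ C.card + G.card := Finset.card_union_le C G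
      _ = 2 * k := by rw [hunif C hC, hunif G hG]; ring
  obtain ⟨y, hy⟩ := hF.inter_inter_nonempty hC hS hG hCS (fun h => hxG (h ▸ hxC)) (Ne.symm hne) hcard
  rw [Finset.inter_comm C S, hSC, Finset.mem_inter, Finset.mem_singleton] at hy
  exact hxG (hy.1 ▸ hy.2)

end CondIntersecting

theorem stmt8_general (n k : ℕ) (hk : 3 ≤ k)
    (F : Finset (Finset (Fin n))) (hunif : ∀ S ∈ F, S.card = k)
    (hci : CondIntersecting 3 (2 * k) F)
    (A B : Finset (Fin n)) (hA : A ∈ F) (hB : B ∈ F)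
    (S : Finset (Fin n)) (hS : S ∈ F) (hS1 : (S ∩ (A ∪ B)).card = 1) :
    ∀ G ∈ F, S \ (A ∪ B) ⊆ G → G = S := by
  intro G hG hsub
  obtain ⟨x, hx⟩ := Finset.card_eq_one.mp hS1
  rw [← Finset.sdiff_inter_self_left, hx, Finset.sdiff_singleton_eq_erase] at hsub
  have hxS : x ∈ S ∧ x ∈ A ∪ B := Finset.mem_inter.mp (hx ▸ Finset.mem_singleton_self x)
  obtain ⟨C, hC, hxC, hCAB⟩ : ∃ C ∈ F, x ∈ C ∧ C ⊆ A ∪ B := by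
    rcases Finset.mem_union.mp hxS.2 with hxA | hxB
    · exact ⟨A, hA, hxA, Finset.subset_union_left⟩
    · exact ⟨B, hB, hxB, Finset.subset_union_right⟩
  have hSC : S ∩ C = {x} :=
    Finset.Subset.antisymm (hx ▸ Finset.inter_subset_inter_left hCAB)
      (Finset.singleton_subset_iff.mpr (Finset.mem_inter.mpr ⟨hxS.1, hxC⟩))
  exact hci.eq_of_erase_subset (by omega) hunif hC hS hG hSC hsub

theorem stmt8 (n k : ℕ) (hk : 3 ≤ k)
    (F : Finset (Finset (Fin n))) (hunif : ∀ S ∈ F, S.card = k)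
    (hci : CondIntersecting 3 (2 * k) F)
    (A B : Finset (Fin n)) (hA : A ∈ F) (hB : B ∈ F) (hAB : Disjoint A B)
    (S : Finset (Fin n)) (hS : S ∈ F) (hS1 : (S ∩ (A ∪ B)).card = 1) :
    ∀ G ∈ F, S \ (A ∪ B) ⊆ G → G = S :=
  stmt8_general n k hk F hunif hci A B hA hB S hS hS1
end

section
/- Let k ≥ 3, n ≥ 3k, let F be a family of k-element subsets of [n], let A, B ∈ F be disjoint, and set U = [n] − (A ∪ B). Then for every i ∈ {1, …, k−2} one has k·n_i ≥ (n−3k)·b_{i+1}, where n_i is the number of non-perfect (k−i)-element subsets of U and b_{i+1} is the number of (k−i−1)-element subsets of U that are non-perfect and are contained in no perfect (k−i)-element subset of U. -/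
/-- `F(C) = {S - C : S ∈ F, S ∩ U = C}`. -/
def FamC {n : ℕ} (F : Finset (Finset (Fin n))) (U C : Finset (Fin n)) :
    Finset (Finset (Fin n)) :=
  (F.filter (fun S => S ∩ U = C)).image (fun S => S \ C)

/-- The family of all `m`-element subsets of `A` that contain `v`. -/
def starFam {n : ℕ} (m : ℕ) (A : Finset (Fin n)) (v : Fin n) :
    Finset (Finset (Fin n)) :=
  (A.powersetCard m).filter (fun E => v ∈ E)

/-- A set `C ⊆ U` of size `k - 1` is perfect if it is contained in some member of `F`;
a set `C ⊆ U` of size at most `k - 2` is perfect if `F(C)` is the full star on `A` with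
some core `v ∈ A`, or the full star on `B` with some core `v ∈ B`. -/
def PerfectSet {n : ℕ} (k : ℕ) (F : Finset (Finset (Fin n))) (A B U : Finset (Fin n))
    (C : Finset (Fin n)) : Prop :=
  if C.card = k - 1 then ∃ S ∈ F, C ⊆ S
  else (∃ v ∈ A, FamC F U C = starFam (k - C.card) A v) ∨
       (∃ v ∈ B, FamC F U C = starFam (k - C.card) B v)

open Classical in
/-- `n_i`: the number of non-perfect `(k-i)`-element subsets of `U`. -/
noncomputable def nonPerfectCount {n : ℕ} (k i : ℕ) (F : Finset (Finset (Fin n)))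
    (A B U : Finset (Fin n)) : ℕ :=
  ((U.powersetCard (k - i)).filter (fun C => ¬ PerfectSet k F A B U C)).card

open Classical in
/-- `b_i`: the number of `(k-i)`-element subsets of `U` that are non-perfect and are
contained in no perfect `(k-i+1)`-element subset of `U`. -/
noncomputable def badCount {n : ℕ} (k i : ℕ) (F : Finset (Finset (Fin n)))
    (A B U : Finset (Fin n)) : ℕ :=
  ((U.powersetCard (k - i)).filter (fun C => ¬ PerfectSet k F A B U C ∧
    ∀ D ∈ U.powersetCard (k - i + 1), C ⊆ D → ¬ PerfectSet k F A B U D)).card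

/-!
Double counting of the pairs `D ⊂ C` with `D` counted by `b_{i+1}` and `C = insert x D ⊆ U`:
every such `C` is non-perfect by the definition of `b_{i+1}`, each `D` has `|U| - |D| ≥ n - 3k`
such extensions, and each `C` contains only `k - i ≤ k` sets of size `k - i - 1`.
-/
open Finset

theorem card_mul_sub_le_card_mul_succ_of_insert_mem {α : Type*} [DecidableEq α]
    {U : Finset α} {m : ℕ} {ℬ 𝒩 : Finset (Finset α)} (hℬ : ℬ ⊆ U.powersetCard m)
    (h𝒩 : (𝒩 : Set (Finset α)).Sized (m + 1))
    (hins : ∀ D ∈ ℬ, ∀ x ∈ U \ D, insert x D ∈ 𝒩) :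
    #ℬ * (#U - m) ≤ #𝒩 * (m + 1) := by
  refine card_mul_le_card_mul (· ⊆ ·) (fun D hD ↦ ?_) (fun C hC ↦ ?_)
  · obtain ⟨hDU, hDm⟩ := mem_powersetCard.1 (hℬ hD)
    calc #U - m = #((U \ D).image (insert · D)) := by
          rw [card_image_of_injOn ((insert_inj_on D).mono fun x hx ↦ (mem_sdiff.1 hx).2),
            card_sdiff_of_subset hDU, hDm]
      _ ≤ #(𝒩.bipartiteAbove (· ⊆ ·) D) := by
          refine card_le_card fun C hC ↦ ?_
          obtain ⟨x, hx, rfl⟩ := mem_image.1 hC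
          exact mem_filter.2 ⟨hins D hD x hx, subset_insert x D⟩
  · calc #(ℬ.bipartiteBelow (· ⊆ ·) C) ≤ #(C.powersetCard m) := by
          refine card_le_card fun D hD ↦ ?_
          obtain ⟨hDℬ, hDC⟩ := mem_filter.1 hD
          exact mem_powersetCard.2 ⟨hDC, (mem_powersetCard.1 (hℬ hDℬ)).2⟩
      _ = m + 1 := by rw [card_powersetCard, h𝒩 hC, Nat.choose_succ_self_right]

theorem stmt10_general (n k : ℕ)
    (F : Finset (Finset (Fin n))) (hunif : ∀ S ∈ F, S.card = k)
    (A B : Finset (Fin n)) (hA : A ∈ F) (hB : B ∈ F)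
    (i : ℕ) (hi1 : 1 ≤ i) (hi2 : i ≤ k - 2) :
    (n - 3 * k) * badCount k (i + 1) F A B (Finset.univ \ (A ∪ B))
      ≤ k * nonPerfectCount k i F A B (Finset.univ \ (A ∪ B)) := by
  classical
  unfold badCount nonPerfectCount
  set U : Finset (Fin n) := univ \ (A ∪ B)
  have hik : k - (i + 1) + 1 = k - i := by omega
  have hUcard : n - 2 * k ≤ #U := by
    have hAB := card_union_le A B
    rw [hunif A hA, hunif B hB] at hAB
    rw [card_univ_sdiff, Fintype.card_fin]
    omega
  set ℬ := {C ∈ U.powersetCard (k - (i + 1)) | ¬ PerfectSet k F A B U C ∧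
    ∀ D ∈ U.powersetCard (k - (i + 1) + 1), C ⊆ D → ¬ PerfectSet k F A B U D}
  set 𝒩 := {C ∈ U.powersetCard (k - i) | ¬ PerfectSet k F A B U C}
  have hins : ∀ D ∈ ℬ, ∀ x ∈ U \ D, insert x D ∈ 𝒩 := by
    intro D hD x hx
    obtain ⟨hDU, -, hup⟩ := mem_filter.1 hD
    obtain ⟨hxU, hxD⟩ := mem_sdiff.1 hx
    have hmem : insert x D ∈ U.powersetCard (k - (i + 1) + 1) := mem_powersetCard.2
      ⟨insert_subset hxU (mem_powersetCard.1 hDU).1,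
        by rw [card_insert_of_notMem hxD, (mem_powersetCard.1 hDU).2]⟩
    exact mem_filter.2 ⟨hik ▸ hmem, hup _ hmem (subset_insert x D)⟩
  calc (n - 3 * k) * #ℬ ≤ #ℬ * (#U - (k - (i + 1))) := by
        rw [mul_comm]; exact Nat.mul_le_mul_left _ (by omega)
    _ ≤ #𝒩 * (k - (i + 1) + 1) :=
        card_mul_sub_le_card_mul_succ_of_insert_mem (filter_subset _ _)
          (fun C hC ↦ (mem_powersetCard.1 (mem_filter.1 hC).1).2.trans hik.symm) hins
    _ ≤ k * #𝒩 := by rw [mul_comm]; exact Nat.mul_le_mul_right _ (by omega)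

theorem stmt10 (n k : ℕ) (hk : 3 ≤ k) (hn : 3 * k ≤ n)
    (F : Finset (Finset (Fin n))) (hunif : ∀ S ∈ F, S.card = k)
    (A B : Finset (Fin n)) (hA : A ∈ F) (hB : B ∈ F) (hAB : Disjoint A B)
    (i : ℕ) (hi1 : 1 ≤ i) (hi2 : i ≤ k - 2) :
    (n - 3 * k) * badCount k (i + 1) F A B (Finset.univ \ (A ∪ B))
      ≤ k * nonPerfectCount k i F A B (Finset.univ \ (A ∪ B)) :=
  stmt10_general n k F hunif A B hA hB i hi1 hi2
end

section
/- Let k ≥ 3 be an integer, let F be a (3, 2k)-conditionally intersecting family of k-element subsets of [n], let A, B ∈ F be disjoint, and set U = [n] − (A ∪ B). Let ℓ be an integer with 2ℓ ≥ k+1 and ℓ ≤ k−1, let C ⊆ U with |C| = ℓ, and suppose F(C) is the full star on A with core v for some v ∈ A. Then for every subset C' of C with |C'| = ℓ−1, the family F(C') is a star on A with core v, i.e., every member of F(C') is a subset of A containing v. -/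
/-!
Write a member of `F(C')` as `S \ C'` with `S ∈ F` and `S ∩ U = C'`. Every `(k - ℓ)`-set `T`
with `v ∈ T ⊆ A` yields `C ∪ T ∈ F`, and `S`, `C ∪ T` and `A` or `B` are distinct, their traces
on `U` having sizes `ℓ - 1`, `ℓ` and `0`. If `|{v} ∪ (S ∩ A)| ≤ k - ℓ`, take `T ⊇ {v} ∪ (S ∩ A)`:
then `S, C ∪ T, B` have empty intersection and union inside `C ∪ T ∪ B`, of size at most `2k`.
If `v ∉ S`, the previous bound leaves `|S ∩ B| ≤ 1` and `|A \ S| ≥ ℓ - 1 ≥ k - ℓ`, so take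
`v ∈ T ⊆ A \ S`: then `S, C ∪ T, A` have empty intersection and union inside
`C ∪ A ∪ (S ∩ B)`, of size at most `ℓ + k + 1 ≤ 2k`. Hence `v ∈ S` and
`|S ∩ A| ≥ k - ℓ + 1 = |S \ C'|`, which forces `S \ C' ⊆ A`.
-/

open Finset

lemma CondIntersecting.lt_card_union {n s : ℕ} {F : Finset (Finset (Fin n))}
    (hci : CondIntersecting 3 s F) {X Y Z : Finset (Fin n)} (hX : X ∈ F) (hY : Y ∈ F)
    (hZ : Z ∈ F) (hXY : X ≠ Y) (hXZ : X ≠ Z) (hYZ : Y ≠ Z) (hXYZ : X ∩ Y ∩ Z = ∅) :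
    s < #(X ∪ Y ∪ Z) := by
  by_contra! h
  refine hci ⟨{X, Y, Z}, ?_, ?_, ?_, ?_⟩
  · simp [insert_subset_iff, hX, hY, hZ]
  · rw [card_insert_of_notMem (by simp [hXY, hXZ]), card_pair hYZ]
  · simpa [union_assoc] using h
  · simpa [inter_assoc] using hXYZ

lemma CondIntersecting.lt_card_union_of_card_inter_lt {n s : ℕ} {F : Finset (Finset (Fin n))}
    (hci : CondIntersecting 3 s F) (U : Finset (Fin n)) {X Y Z : Finset (Fin n)} (hX : X ∈ F)
    (hY : Y ∈ F) (hZ : Z ∈ F) (hZX : #(Z ∩ U) < #(X ∩ U)) (hXY : #(X ∩ U) < #(Y ∩ U))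
    (hXYZ : X ∩ Y ∩ Z = ∅) : s < #(X ∪ Y ∪ Z) :=
  have trace_ne {X Y : Finset (Fin n)} (h : #(X ∩ U) ≠ #(Y ∩ U)) : X ≠ Y :=
    ne_of_apply_ne (fun X => #(X ∩ U)) h
  hci.lt_card_union hX hY hZ (trace_ne hXY.ne) (trace_ne hZX.ne') (trace_ne (hZX.trans hXY).ne')
    hXYZ

section FamC

variable {n : ℕ} {F : Finset (Finset (Fin n))} {U C E : Finset (Fin n)}

lemma mem_FamC : E ∈ FamC F U C ↔ ∃ S ∈ F, S ∩ U = C ∧ S \ C = E := by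
  simp [FamC, and_assoc]

lemma mem_starFam {m : ℕ} {A : Finset (Fin n)} {v : Fin n} :
    E ∈ starFam m A v ↔ E ⊆ A ∧ #E = m ∧ v ∈ E := by
  simp [starFam, mem_powersetCard, and_assoc]

lemma union_mem_of_FamC_eq_starFam {m : ℕ} {A T : Finset (Fin n)} {v : Fin n}
    (hstar : FamC F U C = starFam m A v) (hTA : T ⊆ A) (hT : #T = m) (hvT : v ∈ T) :
    C ∪ T ∈ F ∧ (C ∪ T) ∩ U = C := by
  obtain ⟨S, hS, hSU, rfl⟩ := mem_FamC.1 (hstar ▸ mem_starFam.2 ⟨hTA, hT, hvT⟩)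
  rw [union_sdiff_of_subset (hSU ▸ inter_subset_left)]
  exact ⟨hS, hSU⟩

end FamC

section Trace

variable {n : ℕ} {A B S : Finset (Fin n)}

lemma inter_univ_sdiff_union_left : A ∩ (univ \ (A ∪ B)) = ∅ := by
  ext x; simp +contextual

lemma inter_univ_sdiff_union_right : B ∩ (univ \ (A ∪ B)) = ∅ := by
  ext x; simp +contextual

lemma subset_inter_univ_sdiff_union_union :
    S ⊆ S ∩ (univ \ (A ∪ B)) ∪ S ∩ A ∪ S ∩ B := by
  intro x hx
  by_cases hxA : x ∈ A <;> by_cases hxB : x ∈ B <;> simp [hx, hxA, hxB]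

lemma card_inter_univ_sdiff_union_add_card_inter_add_card_inter (hAB : Disjoint A B) :
    #(S ∩ (univ \ (A ∪ B))) + #(S ∩ A) + #(S ∩ B) = #S := by
  rw [← inter_sdiff_assoc, inter_univ, add_assoc,
    ← card_union_of_disjoint (hAB.mono inter_subset_right inter_subset_right),
    ← inter_union_distrib_left, card_sdiff_add_card_inter]

lemma sdiff_inter_univ_sdiff_union_subset (hSB : Disjoint S B) :
    S \ (S ∩ (univ \ (A ∪ B))) ⊆ A := by
  intro x hx
  obtain ⟨hxS, hxU⟩ := mem_sdiff.1 hx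
  by_contra hxA
  exact hxU (mem_inter.2 ⟨hxS, by simp [hxA, disjoint_left.1 hSB hxS]⟩)

end Trace

section FullStar

variable {n k ℓ : ℕ} {F : Finset (Finset (Fin n))} {A B C S : Finset (Fin n)} {v : Fin n}

lemma lt_card_insert_inter_of_FamC_eq_starFam (hci : CondIntersecting 3 (2 * k) F) (hB : B ∈ F)
    (hBc : #B = k) (hAB : Disjoint A B) (hAc : #A = k) (hv : v ∈ A) (hCc : #C = ℓ)
    (hstar : FamC F (univ \ (A ∪ B)) C = starFam (k - ℓ) A v) (hS : S ∈ F)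
    (hSC : S ∩ (univ \ (A ∪ B)) ⊆ C) (hSc : #(S ∩ (univ \ (A ∪ B))) = ℓ - 1)
    (hℓ : 2 ≤ ℓ) (hℓk : ℓ ≤ k) :
    k - ℓ < #(insert v (S ∩ A)) := by
  by_contra! hle
  obtain ⟨T, hvST, hTA, hTc⟩ :=
    exists_subsuperset_card_eq (insert_subset hv inter_subset_right) hle (by omega)
  obtain ⟨hY, hYU⟩ := union_mem_of_FamC_eq_starFam hstar hTA hTc (hvST (mem_insert_self ..))
  have hCU : C ⊆ univ \ (A ∪ B) := hYU ▸ inter_subset_right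
  have hSub : S ∪ (C ∪ T) ∪ B ⊆ C ∪ T ∪ B :=
    union_subset (union_subset (subset_inter_univ_sdiff_union_union.trans
      (union_subset_union (union_subset_union hSC ((subset_insert _ _).trans hvST))
        inter_subset_right)) subset_union_left) subset_union_right
  refine (hci.lt_card_union_of_card_inter_lt (univ \ (A ∪ B)) hS hY hB ?_ ?_ ?_).not_ge ?_
  · rw [inter_univ_sdiff_union_right, hSc]; simp only [card_empty]; omega
  · rw [hSc, hYU, hCc]; omega
  · refine eq_empty_of_forall_notMem fun x hx => ?_
    simp only [mem_inter, mem_union] at hx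
    obtain ⟨⟨-, hxC | hxT⟩, hxB⟩ := hx
    · simpa [hxB] using hCU hxC
    · exact disjoint_left.1 hAB (hTA hxT) hxB
  · calc #(S ∪ (C ∪ T) ∪ B) ≤ #(C ∪ T ∪ B) := card_le_card hSub
      _ ≤ #C + #T + #B := (card_union_le _ _).trans (Nat.add_le_add_right (card_union_le _ _) _)
      _ ≤ 2 * k := by omega

lemma mem_of_FamC_eq_starFam (hci : CondIntersecting 3 (2 * k) F) (hA : A ∈ F) (hB : B ∈ F)
    (hAc : #A = k) (hBc : #B = k) (hAB : Disjoint A B) (hv : v ∈ A) (hCc : #C = ℓ)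
    (hstar : FamC F (univ \ (A ∪ B)) C = starFam (k - ℓ) A v) (hS : S ∈ F) (hSk : #S = k)
    (hSC : S ∩ (univ \ (A ∪ B)) ⊆ C) (hSc : #(S ∩ (univ \ (A ∪ B))) = ℓ - 1)
    (hℓ1 : k + 1 ≤ 2 * ℓ) (hℓ2 : ℓ ≤ k - 1) :
    v ∈ S := by
  by_contra hvS
  have hSA : k - ℓ ≤ #(S ∩ A) := by
    have := lt_card_insert_inter_of_FamC_eq_starFam hci hB hBc hAB hAc hv hCc hstar hS hSC hSc
      (by omega) (by omega)
    rw [card_insert_of_notMem fun h => hvS (mem_inter.1 h).1] at this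
    omega
  have hsplit := card_inter_univ_sdiff_union_add_card_inter_add_card_inter (S := S) hAB
  have hAS : k - ℓ ≤ #(A \ S) := by rw [card_sdiff, hAc]; omega
  obtain ⟨T, hvT, hTAS, hTc⟩ :=
    exists_subsuperset_card_eq (singleton_subset_iff.2 (mem_sdiff.2 ⟨hv, hvS⟩))
      (by rw [card_singleton]; omega) hAS
  have hTA : T ⊆ A := hTAS.trans sdiff_subset
  obtain ⟨hY, hYU⟩ := union_mem_of_FamC_eq_starFam hstar hTA hTc (hvT (mem_singleton_self v))
  have hCU : C ⊆ univ \ (A ∪ B) := hYU ▸ inter_subset_right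
  have hSub : S ∪ (C ∪ T) ∪ A ⊆ C ∪ A ∪ S ∩ B :=
    union_subset (union_subset (subset_inter_univ_sdiff_union_union.trans
      (union_subset_union (union_subset_union hSC inter_subset_right) subset_rfl))
      ((union_subset_union_right hTA).trans subset_union_left))
      (subset_union_right.trans subset_union_left)
  refine (hci.lt_card_union_of_card_inter_lt (univ \ (A ∪ B)) hS hY hA ?_ ?_ ?_).not_ge ?_
  · rw [inter_univ_sdiff_union_left, hSc]; simp only [card_empty]; omega
  · rw [hSc, hYU, hCc]; omega
  · refine eq_empty_of_forall_notMem fun x hx => ?_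
    simp only [mem_inter, mem_union] at hx
    obtain ⟨⟨hxS, hxC | hxT⟩, hxA⟩ := hx
    · simpa [hxA] using hCU hxC
    · exact (mem_sdiff.1 (hTAS hxT)).2 hxS
  · calc #(S ∪ (C ∪ T) ∪ A) ≤ #(C ∪ A ∪ S ∩ B) := card_le_card hSub
      _ ≤ #C + #A + #(S ∩ B) :=
        (card_union_le _ _).trans (Nat.add_le_add_right (card_union_le _ _) _)
      _ ≤ 2 * k := by omega

end FullStar

theorem stmt11_general (n k : ℕ)
    (F : Finset (Finset (Fin n))) (hunif : ∀ S ∈ F, S.card = k)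
    (hci : CondIntersecting 3 (2 * k) F)
    (A B : Finset (Fin n)) (hA : A ∈ F) (hB : B ∈ F) (hAB : Disjoint A B)
    (ℓ : ℕ) (hℓ1 : k + 1 ≤ 2 * ℓ) (hℓ2 : ℓ ≤ k - 1)
    (C : Finset (Fin n)) (hCcard : C.card = ℓ)
    (v : Fin n) (hv : v ∈ A)
    (hstar : FamC F (Finset.univ \ (A ∪ B)) C = starFam (k - ℓ) A v) :
    ∀ C' ⊆ C, C'.card = ℓ - 1 →
      ∀ E ∈ FamC F (Finset.univ \ (A ∪ B)) C', E ⊆ A ∧ v ∈ E := by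
  intro C' hC'C hC'card E hE
  obtain ⟨S, hS, rfl, rfl⟩ := mem_FamC.1 hE
  have hvS : v ∈ S := mem_of_FamC_eq_starFam hci hA hB (hunif A hA) (hunif B hB) hAB hv hCcard
    hstar hS (hunif S hS) hC'C hC'card hℓ1 hℓ2
  have hSA := lt_card_insert_inter_of_FamC_eq_starFam hci hB (hunif B hB) hAB (hunif A hA) hv
    hCcard hstar hS hC'C hC'card (by omega) (by omega)
  rw [insert_eq_of_mem (mem_inter.2 ⟨hvS, hv⟩)] at hSA
  have hSB : Disjoint S B := disjoint_iff_inter_eq_empty.2 <| card_eq_zero.1 <| by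
    have := card_inter_univ_sdiff_union_add_card_inter_add_card_inter (S := S) hAB
    have := hunif S hS
    omega
  exact ⟨sdiff_inter_univ_sdiff_union_subset hSB,
    mem_sdiff.2 ⟨hvS, fun h => by simpa [hv] using (mem_inter.1 h).2⟩⟩

theorem stmt11 (n k : ℕ) (hk : 3 ≤ k)
    (F : Finset (Finset (Fin n))) (hunif : ∀ S ∈ F, S.card = k)
    (hci : CondIntersecting 3 (2 * k) F)
    (A B : Finset (Fin n)) (hA : A ∈ F) (hB : B ∈ F) (hAB : Disjoint A B)
    (ℓ : ℕ) (hℓ1 : k + 1 ≤ 2 * ℓ) (hℓ2 : ℓ ≤ k - 1)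
    (C : Finset (Fin n)) (hCU : C ⊆ Finset.univ \ (A ∪ B)) (hCcard : C.card = ℓ)
    (v : Fin n) (hv : v ∈ A)
    (hstar : FamC F (Finset.univ \ (A ∪ B)) C = starFam (k - ℓ) A v) :
    ∀ C' ⊆ C, C'.card = ℓ - 1 →
      ∀ E ∈ FamC F (Finset.univ \ (A ∪ B)) C', E ⊆ A ∧ v ∈ E :=
  stmt11_general n k F hunif hci A B hA hB hAB ℓ hℓ1 hℓ2 C hCcard v hv hstar
end

section
/- Let k ≥ 3 be an integer, let F be a (3, 2k)-conditionally intersecting family of k-element subsets of [n], let A, B ∈ F be disjoint, and set U = [n] − (A ∪ B). Let ℓ be an integer with 2 ≤ ℓ ≤ k−2, let C ⊆ U with |C| = ℓ, and suppose F(C) is the full star on A with core v for some v ∈ A. Suppose further that there exists a (k−1)-element set P ⊆ U with C ⊆ P such that P is contained in some member of F. Then for every subset C' of C with |C'| = ℓ−1, the family F(C') is a star on A with core v, i.e., every member of F(C') is a subset of A containing v. -/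
open Finset

variable {n s m k : ℕ} {F : Finset (Finset (Fin n))} {A B C C' E P S U R A' : Finset (Fin n)}
  {v : Fin n}

theorem CondIntersecting.inter_nonempty {X Y Z : Finset (Fin n)} (hci : CondIntersecting 3 s F)
    (hX : X ∈ F) (hY : Y ∈ F) (hZ : Z ∈ F) (hXY : X ≠ Y) (hXZ : X ≠ Z) (hYZ : Y ≠ Z)
    (hs : (X ∪ Y ∪ Z).card ≤ s) : (X ∩ Y ∩ Z).Nonempty := by
  rw [nonempty_iff_ne_empty]
  intro h
  refine hci ⟨{X, Y, Z}, ?_, card_eq_three.mpr ⟨X, Y, Z, hXY, hXZ, hYZ, rfl⟩, ?_, ?_⟩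
  · simp [insert_subset_iff, hX, hY, hZ]
  · simpa [union_assoc] using hs
  · simpa [inter_assoc] using h

theorem union_mem_of_mem_famC (h : E ∈ FamC F U C) : C ∪ E ∈ F := by
  obtain ⟨S, hS, rfl⟩ := mem_image.mp h
  rw [mem_filter] at hS
  rw [union_sdiff_of_subset (hS.2 ▸ inter_subset_left)]
  exact hS.1

theorem disjoint_left_of_mem_famC (h : E ∈ FamC F U C) : Disjoint C E := by
  obtain ⟨S, -, rfl⟩ := mem_image.mp h
  exact disjoint_sdiff

theorem disjoint_of_mem_famC (h : E ∈ FamC F U C) : Disjoint E U := by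
  obtain ⟨S, hS, rfl⟩ := mem_image.mp h
  rw [disjoint_iff_inter_eq_empty, sdiff_inter_right_comm, (mem_filter.mp hS).2, sdiff_self,
    bot_eq_empty]

theorem exists_union_mem_of_famC_eq_starFam (hstar : FamC F U C = starFam m A v)
    (hRA' : R ⊆ A') (hA'A : A' ⊆ A) (hvR : v ∈ R) (hRm : R.card ≤ m)
    (hmA' : m ≤ A'.card) :
    ∃ T, R ⊆ T ∧ T ⊆ A' ∧ T.card = m ∧ C ∪ T ∈ F := by
  obtain ⟨T, hRT, hTA', rfl⟩ := exists_subsuperset_card_eq hRA' hRm hmA'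
  refine ⟨T, hRT, hTA', rfl, union_mem_of_mem_famC (U := U) ?_⟩
  rw [hstar]
  simp [starFam, mem_powersetCard, hTA'.trans hA'A, hRT hvR]

theorem CondIntersecting.eq_insert_of_famC_eq_starFam (hci : CondIntersecting 3 s F)
    (hA : A ∈ F) (hS : S ∈ F) (hAS : A.card + S.card ≤ s) (hstar : FamC F U C = starFam m A v)
    (hv : v ∈ A) (hm : 0 < m) (hmA : m < A.card) (hC : C.Nonempty) (hCP : C ⊂ P)
    (hPA : Disjoint P A) (hPS : P ⊆ S) (hSP : S.card = P.card + 1) : S = insert v P := by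
  obtain ⟨x, -, rfl⟩ := exists_eq_insert_iff.mpr ⟨hPS, hSP.symm⟩
  suffices x = v by rw [this]
  by_contra hxv
  obtain ⟨T, -, hTA', -, hCT⟩ := exists_union_mem_of_famC_eq_starFam (R := {v}) hstar
    (singleton_subset_iff.mpr (mem_erase.mpr ⟨Ne.symm hxv, hv⟩)) (erase_subset x A)
    (mem_singleton_self v) ((card_singleton v).trans_le hm)
    (by have := pred_card_le_card_erase (s := A) (a := x); omega)
  have hTA : T ⊆ A := hTA'.trans (erase_subset x A)
  have hxT : x ∉ T := fun h => (mem_erase.mp (hTA' h)).1 rfl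
  obtain ⟨c, hc⟩ := hC
  obtain ⟨w, hwP, hwC⟩ := not_subset.mp hCP.2
  have hwA : w ∉ A := disjoint_left.mp hPA hwP
  have hsub : A ∪ insert x P ∪ (C ∪ T) ⊆ A ∪ insert x P :=
    union_subset subset_rfl (union_subset
      (hCP.1.trans ((subset_insert x P).trans subset_union_right)) (hTA.trans subset_union_left))
  obtain ⟨a, ha⟩ := hci.inter_nonempty hA hS hCT
    (ne_of_mem_of_not_mem' (mem_insert_of_mem hwP) hwA).symm
    (ne_of_mem_of_not_mem' (mem_union_left T hc) (disjoint_left.mp hPA (hCP.1 hc))).symm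
    (ne_of_mem_of_not_mem' (mem_insert_of_mem hwP)
      (notMem_union.mpr ⟨hwC, fun h => hwA (hTA h)⟩))
    ((card_le_card hsub).trans ((card_union_le _ _).trans hAS))
  simp only [mem_inter] at ha
  have haP : a ∉ P := disjoint_right.mp hPA ha.1.1
  rcases mem_union.mp ha.2 with haC | haT
  · exact haP (hCP.1 haC)
  · exact hxT ((mem_insert.mp ha.1.2).resolve_right haP ▸ haT)

theorem CondIntersecting.lt_card_insert_inter_of_famC_eq_starFam (hci : CondIntersecting 3 s F)
    (hB : B ∈ F) (hS : S ∈ F) (hs : B.card + C.card + m ≤ s)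
    (hstar : FamC F U C = starFam m A v) (hv : v ∈ A) (hmA : m ≤ A.card) (hAB : Disjoint A B)
    (hCB : Disjoint C B) (hSsub : S ⊆ C ∪ A ∪ B) (hSB : ¬ S ⊆ B) (hCS : ¬ C ⊆ S) :
    m < (insert v (S ∩ A)).card := by
  by_contra! hle
  obtain ⟨T, hST, hTA, hTm, hCT⟩ := exists_union_mem_of_famC_eq_starFam hstar
    (insert_subset hv inter_subset_right) subset_rfl (mem_insert_self v _) hle hmA
  obtain ⟨u, huC, huS⟩ := not_subset.mp hCS
  have hsub : B ∪ (C ∪ T) ∪ S ⊆ B ∪ (C ∪ T) := by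
    refine union_subset subset_rfl fun a ha => ?_
    have : a ∈ A → a ∈ T := fun haA => hST (mem_insert_of_mem (mem_inter.mpr ⟨ha, haA⟩))
    have := hSsub ha
    simp only [mem_union] at this ⊢
    tauto
  obtain ⟨a, ha⟩ := hci.inter_nonempty hB hCT hS
    (ne_of_mem_of_not_mem' (mem_union_left T huC) (disjoint_left.mp hCB huC)).symm
    (fun h => hSB h.ge) (ne_of_mem_of_not_mem' (mem_union_left T huC) huS)
    ((card_le_card hsub).trans ((card_union_le _ _).trans
      (by have := card_union_le C T; omega)))
  simp only [mem_inter, mem_union] at ha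
  rcases ha.1.2 with haC | haT
  · exact disjoint_left.mp hCB haC ha.1.1
  · exact disjoint_left.mp hAB (hTA haT) ha.1.1

theorem CondIntersecting.mem_of_insert_mem (hci : CondIntersecting 3 s F) (hA : A ∈ F)
    (hvP : insert v P ∈ F) (hS : S ∈ F) (hv : v ∈ A) (hPA : Disjoint P A) (hSA : ¬ S ⊆ A)
    (hPS : ¬ P ⊆ S) (hs : A.card + P.card + (S \ (A ∪ P)).card ≤ s) : v ∈ S := by
  by_contra hvS
  obtain ⟨w, hwP, hwS⟩ := not_subset.mp hPS
  have hsub : A ∪ insert v P ∪ S ⊆ A ∪ P ∪ S \ (A ∪ P) := by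
    intro a ha
    simp only [mem_union, mem_insert, mem_sdiff] at ha ⊢
    rcases ha with (haA | rfl | haP) | haS <;> tauto
  obtain ⟨a, ha⟩ := hci.inter_nonempty hA hvP hS
    (ne_of_mem_of_not_mem' (mem_insert_of_mem hwP) (disjoint_left.mp hPA hwP)).symm
    (fun h => hSA h.ge) (ne_of_mem_of_not_mem' (mem_insert_of_mem hwP) hwS)
    ((card_le_card hsub).trans (by
      have := card_union_le (A ∪ P) (S \ (A ∪ P)); have := card_union_le A P; omega))
  simp only [mem_inter, mem_insert] at ha
  obtain ⟨⟨haA, rfl | haP⟩, haS⟩ := ha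
  · exact hvS haS
  · exact disjoint_left.mp hPA haP haA

theorem CondIntersecting.subset_and_mem_of_mem_famC (hci : CondIntersecting 3 (2 * k) F)
    (hunif : ∀ S ∈ F, S.card = k) (hA : A ∈ F) (hB : B ∈ F) (hAB : Disjoint A B)
    (hv : v ∈ A) (hCU : C ⊆ univ \ (A ∪ B))
    (hstar : FamC F (univ \ (A ∪ B)) C = starFam (k - C.card) A v)
    (hvP : insert v P ∈ F) (hPA : Disjoint P A) (hCP : C ⊆ P) (hC'C : C' ⊆ C)
    (hC'card : C'.card + 1 = C.card) (hC' : C'.Nonempty) (hE : E ∈ FamC F (univ \ (A ∪ B)) C') :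
    E ⊆ A ∧ v ∈ E := by
  have hCAB : Disjoint C (A ∪ B) := (subset_sdiff.mp hCU).2
  have hEAB : E ⊆ A ∪ B :=
    disjoint_compl_right_iff.mp (compl_eq_univ_sdiff (A ∪ B) ▸ disjoint_of_mem_famC hE)
  have hS₀ := union_mem_of_mem_famC hE
  obtain ⟨c', hc'⟩ := hC'
  have hc'AB : c' ∉ A ∪ B := disjoint_left.mp hCAB (hC'C hc')
  obtain ⟨u, huC, huC'⟩ := not_subset.mp fun h : C ⊆ C' => by have := card_le_card h; omega
  have huS₀ : u ∉ C' ∪ E := by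
    simpa [huC'] using fun hu => disjoint_left.mp hCAB huC (hEAB hu)
  have hPk : P.card + 1 = k := by
    rw [← hunif _ hvP, card_insert_of_notMem (disjoint_right.mp hPA hv)]
  have hEk : C'.card + E.card = k := by
    rw [← hunif _ hS₀, card_union_of_disjoint (disjoint_left_of_mem_famC hE)]
  have hCle := card_le_card hCP
  have hlt := hci.lt_card_insert_inter_of_famC_eq_starFam hB hS₀ (by rw [hunif B hB]; omega)
    hstar hv (by rw [hunif A hA]; omega) hAB (hCAB.mono_right subset_union_right)
    (union_subset (hC'C.trans (subset_union_left.trans subset_union_left))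
      (hEAB.trans (union_subset_union_left subset_union_right)))
    (fun h => hc'AB (mem_union_right _ (h (mem_union_left _ hc'))))
    (not_subset.mpr ⟨u, huC, huS₀⟩)
  have hC'A : Disjoint C' A := hCAB.mono hC'C subset_union_left
  rw [union_inter_distrib_right, disjoint_iff_inter_eq_empty.mp hC'A, empty_union] at hlt
  have hEout : (E \ A).card ≤ 1 := by
    have := card_insert_le v (E ∩ A); have := card_inter_add_card_sdiff E A; omega
  have hsub : (C' ∪ E) \ (A ∪ P) ⊆ E \ A := by
    intro a ha
    simp only [mem_sdiff, mem_union, not_or] at ha ⊢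
    exact ⟨ha.1.resolve_left fun h => ha.2.2 (hCP (hC'C h)), ha.2.1⟩
  have hvE : v ∈ E := by
    have := hci.mem_of_insert_mem hA hvP hS₀ hv hPA
      (fun h => hc'AB (mem_union_left _ (h (mem_union_left _ hc'))))
      (not_subset.mpr ⟨u, hCP huC, huS₀⟩)
      (by have := card_le_card hsub; rw [hunif A hA]; omega)
    exact (mem_union.mp this).resolve_left (disjoint_right.mp hC'A hv)
  rw [insert_eq_of_mem (mem_inter.mpr ⟨hvE, hv⟩)] at hlt
  have hEA : E ∩ A = E := eq_of_subset_of_card_le inter_subset_left (by omega)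
  exact ⟨hEA ▸ inter_subset_right, hvE⟩

theorem stmt12_general (n k : ℕ)
    (F : Finset (Finset (Fin n))) (hunif : ∀ S ∈ F, S.card = k)
    (hci : CondIntersecting 3 (2 * k) F)
    (A B : Finset (Fin n)) (hA : A ∈ F) (hB : B ∈ F) (hAB : Disjoint A B)
    (ℓ : ℕ) (hℓ1 : 2 ≤ ℓ) (hℓ2 : ℓ ≤ k - 2)
    (C : Finset (Fin n)) (hCU : C ⊆ Finset.univ \ (A ∪ B)) (hCcard : C.card = ℓ)
    (v : Fin n) (hv : v ∈ A)
    (hstar : FamC F (Finset.univ \ (A ∪ B)) C = starFam (k - ℓ) A v)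
    (P : Finset (Fin n)) (hPU : P ⊆ Finset.univ \ (A ∪ B)) (hPcard : P.card = k - 1)
    (hCP : C ⊆ P) (hPF : ∃ S ∈ F, P ⊆ S) :
    ∀ C' ⊆ C, C'.card = ℓ - 1 →
      ∀ E ∈ FamC F (Finset.univ \ (A ∪ B)) C', E ⊆ A ∧ v ∈ E := by
  intro C' hC'C hC'card E hE
  have hPA : Disjoint P A := (subset_sdiff.mp hPU).2.mono_right subset_union_left
  have hCP' : C ⊂ P := hCP.ssubset_of_ne fun h => by subst h; omega
  obtain ⟨S, hSF, hPS⟩ := hPF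
  have hSv : S = insert v P :=
    hci.eq_insert_of_famC_eq_starFam hA hSF (by rw [hunif A hA, hunif S hSF, two_mul]) hstar hv
      (by omega) (by rw [hunif A hA]; omega) (card_pos.mp (by omega)) hCP' hPA hPS
      (by rw [hunif S hSF]; omega)
  exact hci.subset_and_mem_of_mem_famC hunif hA hB hAB hv hCU (by rwa [hCcard]) (hSv ▸ hSF)
    hPA hCP hC'C (by omega) (card_pos.mp (by omega)) hE

theorem stmt12 (n k : ℕ) (hk : 3 ≤ k)
    (F : Finset (Finset (Fin n))) (hunif : ∀ S ∈ F, S.card = k)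
    (hci : CondIntersecting 3 (2 * k) F)
    (A B : Finset (Fin n)) (hA : A ∈ F) (hB : B ∈ F) (hAB : Disjoint A B)
    (ℓ : ℕ) (hℓ1 : 2 ≤ ℓ) (hℓ2 : ℓ ≤ k - 2)
    (C : Finset (Fin n)) (hCU : C ⊆ Finset.univ \ (A ∪ B)) (hCcard : C.card = ℓ)
    (v : Fin n) (hv : v ∈ A)
    (hstar : FamC F (Finset.univ \ (A ∪ B)) C = starFam (k - ℓ) A v)
    (P : Finset (Fin n)) (hPU : P ⊆ Finset.univ \ (A ∪ B)) (hPcard : P.card = k - 1)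
    (hCP : C ⊆ P) (hPF : ∃ S ∈ F, P ⊆ S) :
    ∀ C' ⊆ C, C'.card = ℓ - 1 →
      ∀ E ∈ FamC F (Finset.univ \ (A ∪ B)) C', E ⊆ A ∧ v ∈ E :=
  stmt12_general n k F hunif hci A B hA hB hAB ℓ hℓ1 hℓ2 C hCU hCcard v hv hstar P hPU hPcard hCP
    hPF
end

section
/- Let k ≥ 3 and n ≥ 3k·binomial(2k, k). Let F be a (3, 2k)-conditionally intersecting family of k-element subsets of [n] such that every member F of F contains a (k−1)-element subset that is contained in no other member of F, and let A, B ∈ F be disjoint. Then the number of members F of F with |F ∩ (A ∪ B)| ≤ 1 is at most binomial(n−2k, k−1). -/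
/-!
Send a member `S` of the family with `|S ∩ U| ≤ 1`, where `U = A ∪ B`, to a `(k-1)`-subset of
the complement of `U`: its private `(k-1)`-subset if `S` misses `U`, and `S \ U` otherwise.
A private subset determines its member, so the only possible collision is between two members
`S = P ∪ {x}` and `T = P ∪ {y}` with `x ≠ y` in `U`. Taking `C ∈ {A, B}` through `x`, the three
members `S, T, C` have union `T ∪ C` of size at most `2k` and empty intersection, which the
`(3, 2k)`-condition forbids.
-/

open Finset

variable {n k : ℕ} {F : Finset (Finset (Fin n))}

theorem CondIntersecting.inter_inter_nonempty_s15 {s : ℕ} (hF : CondIntersecting 3 s F)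
    {S T C : Finset (Fin n)} (hS : S ∈ F) (hT : T ∈ F) (hC : C ∈ F)
    (hST : S ≠ T) (hSC : S ≠ C) (hTC : T ≠ C) (hcard : #(S ∪ T ∪ C) ≤ s) :
    (S ∩ T ∩ C).Nonempty := by
  rw [nonempty_iff_ne_empty]
  intro hempty
  refine hF ⟨{S, T, C}, ?_, card_eq_three.2 ⟨S, T, C, hST, hSC, hTC, rfl⟩, ?_, ?_⟩
  · simp only [insert_subset_iff, singleton_subset_iff]
    exact ⟨hS, hT, hC⟩
  · simpa [union_assoc] using hcard
  · simpa [inter_assoc] using hempty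

theorem eq_of_sdiff_eq_of_inter_eq_singleton (hF : CondIntersecting 3 (2 * k) F)
    (hunif : ∀ S ∈ F, #S = k) (hk : 2 ≤ k) {U S T C : Finset (Fin n)} {x y : Fin n}
    (hS : S ∈ F) (hT : T ∈ F) (hC : C ∈ F) (hCU : C ⊆ U) (hxC : x ∈ C)
    (hSx : S ∩ U = {x}) (hTy : T ∩ U = {y}) (hST : S \ U = T \ U) : S = T := by
  by_contra hne
  have hxy : x ≠ y := by
    rintro rfl
    rw [← sdiff_union_inter S U, ← sdiff_union_inter T U, hST, hSx, hTy] at hne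
    exact hne rfl
  have hneC : ∀ {R z}, R ∈ F → R ∩ U = {z} → R ≠ C := by
    rintro R z hR hRz rfl
    have := congrArg card hRz
    rw [inter_eq_left.2 hCU, hunif R hR, card_singleton] at this
    omega
  have hSTC : S ⊆ T ∪ C := by
    rw [← sdiff_union_inter S U, hST, hSx]
    exact union_subset_union sdiff_subset (singleton_subset_iff.2 hxC)
  have hcard : #(S ∪ T ∪ C) ≤ 2 * k := by
    rw [union_assoc, union_eq_right.2 hSTC]
    exact (card_union_le T C).trans (by rw [hunif T hT, hunif C hC]; omega)
  obtain ⟨z, hz⟩ := hF.inter_inter_nonempty_s15 hS hT hC hne (hneC hS hSx) (hneC hT hTy) hcard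
  simp only [mem_inter] at hz
  have hzx : z ∈ S ∩ U := mem_inter.2 ⟨hz.1.1, hCU hz.2⟩
  have hzy : z ∈ T ∩ U := mem_inter.2 ⟨hz.1.2, hCU hz.2⟩
  rw [hSx, mem_singleton] at hzx
  rw [hTy, mem_singleton] at hzy
  exact hxy (hzx.symm.trans hzy)

theorem card_filter_card_inter_le_one_le (hF : CondIntersecting 3 (2 * k) F)
    (hunif : ∀ S ∈ F, #S = k) (hk : 2 ≤ k)
    (huniq : ∀ S ∈ F, ∃ G ⊆ S, #G = k - 1 ∧ ∀ T ∈ F, G ⊆ T → T = S)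
    {U : Finset (Fin n)} (hU : ∀ x ∈ U, ∃ C ∈ F, C ⊆ U ∧ x ∈ C) :
    #(F.filter fun S => #(S ∩ U) ≤ 1) ≤ (n - #U).choose (k - 1) := by
  choose! g hgS hgcard hguniq using huniq
  set f : Finset (Fin n) → Finset (Fin n) := fun S => if Disjoint S U then g S else S \ U
  have hsingleton : ∀ S, #(S ∩ U) ≤ 1 → ¬Disjoint S U → ∃ x, S ∩ U = {x} := fun S h1 h2 =>
    card_eq_one.1 (le_antisymm h1 (card_pos.2 (not_disjoint_iff_nonempty_inter.1 h2)))
  have hfS : ∀ S ∈ F, f S ⊆ S := fun S hS => by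
    by_cases h : Disjoint S U
    · simpa [f, h] using hgS S hS
    · simp [f, h]
  have hmaps : ∀ S ∈ F.filter fun S => #(S ∩ U) ≤ 1, f S ∈ powersetCard (k - 1) (univ \ U) := by
    intro S hS
    obtain ⟨hSF, hS1⟩ := mem_filter.1 hS
    rw [mem_powersetCard, subset_sdiff, and_iff_right (subset_univ _)]
    by_cases h : Disjoint S U
    · simpa [f, h] using ⟨h.mono_left (hgS S hSF), hgcard S hSF⟩
    · obtain ⟨x, hx⟩ := hsingleton S hS1 h
      have := card_sdiff_add_card_inter S U
      rw [hx, card_singleton, hunif S hSF] at this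
      simp only [f, if_neg h]
      exact ⟨disjoint_sdiff_self_left, by omega⟩
  have hinj : Set.InjOn f (F.filter fun S => #(S ∩ U) ≤ 1) := by
    intro S hS T hT hfST
    obtain ⟨hSF, hS1⟩ := mem_filter.1 hS
    obtain ⟨hTF, hT1⟩ := mem_filter.1 hT
    by_cases hSU : Disjoint S U
    · have hgT : f S ⊆ T := hfST ▸ hfS T hTF
      exact (hguniq S hSF T hTF (by simpa [f, hSU] using hgT)).symm
    by_cases hTU : Disjoint T U
    · have hgS' : f T ⊆ S := hfST ▸ hfS S hSF
      exact hguniq T hTF S hSF (by simpa [f, hTU] using hgS')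
    obtain ⟨x, hx⟩ := hsingleton S hS1 hSU
    obtain ⟨y, hy⟩ := hsingleton T hT1 hTU
    have hxU : x ∈ U := (mem_inter.1 (hx ▸ mem_singleton_self x)).2
    obtain ⟨C, hC, hCU, hxC⟩ := hU x hxU
    exact eq_of_sdiff_eq_of_inter_eq_singleton hF hunif hk hSF hTF hC hCU hxC hx hy
      (by simpa [f, hSU, hTU] using hfST)
  calc #(F.filter fun S => #(S ∩ U) ≤ 1) ≤ #(powersetCard (k - 1) (univ \ U)) :=
        card_le_card_of_injOn f hmaps hinj
    _ = (n - #U).choose (k - 1) := by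
        rw [card_powersetCard, card_univ_sdiff, Fintype.card_fin]

theorem stmt15_general (n k : ℕ) (hk : 3 ≤ k)
    (F : Finset (Finset (Fin n))) (hunif : ∀ S ∈ F, S.card = k)
    (hci : CondIntersecting 3 (2 * k) F)
    (huniq : ∀ S ∈ F, ∃ G ⊆ S, G.card = k - 1 ∧ ∀ T ∈ F, G ⊆ T → T = S)
    (A B : Finset (Fin n)) (hA : A ∈ F) (hB : B ∈ F) (hAB : Disjoint A B) :
    (F.filter (fun S => (S ∩ (A ∪ B)).card ≤ 1)).card ≤ (n - 2 * k).choose (k - 1) := by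
  have hcover : ∀ x ∈ A ∪ B, ∃ C ∈ F, C ⊆ A ∪ B ∧ x ∈ C := by
    intro x hx
    rcases mem_union.1 hx with hxA | hxB
    · exact ⟨A, hA, subset_union_left, hxA⟩
    · exact ⟨B, hB, subset_union_right, hxB⟩
  have hcard : #(A ∪ B) = 2 * k := by
    rw [card_union_of_disjoint hAB, hunif A hA, hunif B hB, two_mul]
  simpa [hcard] using card_filter_card_inter_le_one_le hci hunif (by omega) huniq hcover

theorem stmt15 (n k : ℕ) (hk : 3 ≤ k) (hn : 3 * k * (2 * k).choose k ≤ n)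
    (F : Finset (Finset (Fin n))) (hunif : ∀ S ∈ F, S.card = k)
    (hci : CondIntersecting 3 (2 * k) F)
    (huniq : ∀ S ∈ F, ∃ G ⊆ S, G.card = k - 1 ∧ ∀ T ∈ F, G ⊆ T → T = S)
    (A B : Finset (Fin n)) (hA : A ∈ F) (hB : B ∈ F) (hAB : Disjoint A B) :
    (F.filter (fun S => (S ∩ (A ∪ B)).card ≤ 1)).card ≤ (n - 2 * k).choose (k - 1) :=
  stmt15_general n k hk F hunif hci huniq A B hA hB hAB
end

section
/- Let n ≥ 5 and let F be a (3, 6)-conditionally intersecting family of 3-element subsets of [n]. Then |F| ≤ binomial(n−1, 2). -/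
/-!
Induction on the ground set `V`. Up to four points every triple may be taken; from five points on
the bound is that of a star. If no pair of points lies in two members, counting pairs gives
`3 #F ≤ C(#V, 2)`. Otherwise some pair `{x, y}` lies in two members `{x, y, c}` and `{x, y, c'}`,
and a member avoiding `x` and `y` must avoid both of them: a member `C` meeting `{x, y, c}` in `c`
would give three members with union inside `{x, y, c'} ∪ C` and empty intersection.
On five points this forces every member to meet `{x, y}`, and a direct count gives 6.
On six or more points, if `{x, c}` or `{y, c}` lies in no other member, then every member through
`c` also contains `y` or `x` respectively, so `c` lies in at most `#V - 2` members and we delete it.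
Otherwise each pair of `{x, y, c}` lies in two members, every member meets `{x, y, c}` in at least
two points or avoids `{x, y, c, c'}`, and this gives `1 + 3 (#V - 3) + extremalBound (#V - 4)`.
-/

open Finset

namespace TripleFamily

variable {α : Type*} [DecidableEq α] {F G : Finset (Finset α)} {V : Finset α}

def extremalBound (m : ℕ) : ℕ := if m ≤ 4 then m.choose 3 else (m - 1).choose 2

lemma extremalBound_of_le_four {m : ℕ} (h : m ≤ 4) : extremalBound m = m.choose 3 := if_pos h

lemma extremalBound_of_five_le {m : ℕ} (h : 5 ≤ m) : extremalBound m = (m - 1).choose 2 :=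
  if_neg (by omega)

lemma choose_two_le_three_mul {m : ℕ} (h : 3 ≤ m) : m.choose 2 ≤ 3 * (m - 1).choose 2 := by
  obtain ⟨k, rfl⟩ : ∃ k, m = k + 3 := ⟨m - 3, by omega⟩
  rw [show k + 3 - 1 = k + 2 by omega, ← Nat.cast_le (α := ℚ)]
  push_cast [Nat.cast_choose_two]
  ring_nf
  nlinarith

lemma choose_two_pred {m : ℕ} (h : 2 ≤ m) : (m - 1).choose 2 = (m - 2).choose 2 + (m - 2) := by
  obtain ⟨k, rfl⟩ : ∃ k, m = k + 2 := ⟨m - 2, by omega⟩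
  simp [Nat.choose_succ_succ', add_comm]

lemma one_add_three_mul_add_extremalBound_le {m : ℕ} (h : 6 ≤ m) :
    1 + 3 * (m - 3) + extremalBound (m - 4) ≤ (m - 1).choose 2 := by
  rcases le_or_gt m 8 with h8 | h8
  · interval_cases m <;> decide
  · obtain ⟨k, rfl⟩ : ∃ k, m = k + 9 := ⟨m - 9, by omega⟩
    rw [extremalBound_of_five_le (by omega), show k + 9 - 4 - 1 = k + 4 by omega,
      show k + 9 - 3 = k + 6 by omega, show k + 9 - 1 = k + 8 by omega, ← Nat.cast_le (α := ℚ)]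
    push_cast [Nat.cast_choose_two]
    ring_nf
    nlinarith

lemma ne_of_card_eq_three {x y z : α} (h : #({x, y, z} : Finset α) = 3) :
    x ≠ y ∧ x ≠ z ∧ y ≠ z := by
  refine ⟨?_, ?_, ?_⟩ <;> rintro rfl
  all_goals simp only [mem_insert, mem_singleton, true_or, or_true, insert_eq_of_mem] at h
  all_goals exact absurd (h.symm.trans_le card_le_two) (by norm_num)

lemma eq_triple_of_mem {A : Finset α} {u v w : α} (hA : #A = 3) (hu : u ∈ A) (hv : v ∈ A)
    (hw : w ∈ A) (huv : u ≠ v) (huw : u ≠ w) (hvw : v ≠ w) : A = {u, v, w} := by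
  refine (eq_of_subset_of_card_le ?_ ?_).symm
  · simp only [insert_subset_iff, singleton_subset_iff]
    exact ⟨hu, hv, hw⟩
  · rw [hA, card_eq_three.2 ⟨u, v, w, huv, huw, hvw, rfl⟩]

lemma exists_eq_triple {A : Finset α} {u v : α} (hA : #A = 3) (hu : u ∈ A) (hv : v ∈ A)
    (huv : u ≠ v) : ∃ w, A = {u, v, w} := by
  obtain ⟨w, hw⟩ : (A \ {u, v}).Nonempty := by
    rw [← card_pos, card_sdiff_of_subset (by simp [insert_subset_iff, hu, hv]), hA,
      card_pair huv]
    norm_num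
  simp only [mem_sdiff, mem_insert, mem_singleton, not_or] at hw
  exact ⟨w, eq_triple_of_mem hA hu hv hw.1 huv (Ne.symm hw.2.1) (Ne.symm hw.2.2)⟩

def degree (F : Finset (Finset α)) (z : α) : ℕ := #{A ∈ F | z ∈ A}

def codegree (F : Finset (Finset α)) (u v : α) : ℕ := #{A ∈ F | u ∈ A ∧ v ∈ A}

lemma codegree_comm (F : Finset (Finset α)) (u v : α) : codegree F u v = codegree F v u := by
  simp only [codegree, and_comm]

lemma card_filter_superset_le {k : ℕ} (hFV : F ⊆ V.powersetCard k) {s : Finset α}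
    (hs : s ⊆ V) : #{A ∈ F | s ⊆ A} ≤ (#V - #s).choose (k - #s) := by
  rw [← card_sdiff_of_subset hs, ← card_powersetCard]
  refine card_le_card_of_injOn (· \ s) (fun A hA => ?_) (fun A hA B hB hAB => ?_)
  · simp only [coe_filter, Set.mem_ofPred_eq] at hA
    obtain ⟨hAV, hAk⟩ := mem_powersetCard.1 (hFV hA.1)
    exact mem_powersetCard.2
      ⟨sdiff_subset_sdiff hAV le_rfl, by rw [card_sdiff_of_subset hA.2, hAk]⟩
  · simp only [coe_filter, Set.mem_ofPred_eq] at hA hB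
    rw [← union_sdiff_of_subset hA.2, ← union_sdiff_of_subset hB.2]
    exact congrArg (s ∪ ·) hAB

lemma codegree_le (hFV : F ⊆ V.powersetCard 3) {u v : α} (huv : u ≠ v) (hu : u ∈ V)
    (hv : v ∈ V) : codegree F u v ≤ #V - 2 := by
  have h := card_filter_superset_le hFV (s := {u, v}) (by simp [insert_subset_iff, hu, hv])
  simpa [card_pair huv, codegree, insert_subset_iff] using h

lemma degree_le (hFV : F ⊆ V.powersetCard 3) {z : α} (hz : z ∈ V) :
    degree F z ≤ (#V - 1).choose 2 := by
  simpa [degree] using card_filter_superset_le hFV (s := {z}) (by simpa using hz)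

lemma choose_two_mul_card_le {k : ℕ} (hFV : F ⊆ V.powersetCard k)
    (hlin : ∀ u v, u ≠ v → codegree F u v ≤ 1) : k.choose 2 * #F ≤ (#V).choose 2 := by
  have hdisj : (F : Set (Finset α)).PairwiseDisjoint (powersetCard 2) := by
    intro A hA B hB hAB
    refine disjoint_left.2 fun p hpA hpB => hAB ?_
    obtain ⟨hpA, hp2⟩ := mem_powersetCard.1 hpA
    obtain ⟨u, v, huv, rfl⟩ := card_eq_two.1 hp2
    have hpB := (mem_powersetCard.1 hpB).1
    simp only [insert_subset_iff, singleton_subset_iff] at hpA hpB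
    exact card_le_one.1 (hlin u v huv) A (by simp_all) B (by simp_all)
  calc k.choose 2 * #F = #(F.biUnion (powersetCard 2)) := by
        rw [card_biUnion hdisj, sum_congr rfl fun A hA => by
          rw [card_powersetCard, (mem_powersetCard.1 (hFV hA)).2], sum_const, smul_eq_mul,
          mul_comm]
    _ ≤ #(V.powersetCard 2) := card_le_card <| biUnion_subset.2 fun A hA =>
        powersetCard_mono (mem_powersetCard.1 (hFV hA)).1
    _ = (#V).choose 2 := card_powersetCard 2 V

lemma card_filter_two_le_card_inter_le (hFV : F ⊆ V.powersetCard 3) {T : Finset α}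
    (hTV : T ⊆ V) (hT : #T = 3) : #{C ∈ F | 2 ≤ #(C ∩ T)} ≤ 1 + 3 * (#V - 3) := by
  have hcover : {C ∈ F | 2 ≤ #(C ∩ T)} ⊆
      insert T ((T.powersetCard 2 ×ˢ (V \ T)).image fun pv => insert pv.2 pv.1) := by
    intro C hC
    obtain ⟨hCF, h2⟩ := mem_filter.1 hC
    obtain ⟨hCV, hC3⟩ := mem_powersetCard.1 (hFV hCF)
    rw [mem_insert, mem_image]
    by_cases hTC : T ⊆ C
    · exact Or.inl (eq_of_subset_of_card_le hTC (hC3.trans hT.symm).le).symm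
    have hle : #(C ∩ T) ≤ 2 := by
      by_contra! h
      have hCT : C ∩ T = T := eq_of_subset_of_card_le inter_subset_right (by omega)
      exact hTC (hCT ▸ inter_subset_left)
    obtain ⟨v, hv⟩ := card_eq_one.1
      (by have := card_inter_add_card_sdiff C T; omega : #(C \ T) = 1)
    have hvC : v ∈ C \ T := hv ▸ mem_singleton_self v
    refine Or.inr ⟨(C ∩ T, v),
      mem_product.2 ⟨mem_powersetCard.2 ⟨inter_subset_right, le_antisymm hle h2⟩,
      mem_sdiff.2 ⟨hCV (mem_sdiff.1 hvC).1, (mem_sdiff.1 hvC).2⟩⟩, ?_⟩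
    change insert v (C ∩ T) = C
    rw [insert_eq, ← hv, sdiff_union_inter]
  calc #{C ∈ F | 2 ≤ #(C ∩ T)}
      ≤ #((T.powersetCard 2 ×ˢ (V \ T)).image fun pv => insert pv.2 pv.1) + 1 :=
        (card_le_card hcover).trans (card_insert_le _ _)
    _ ≤ #(T.powersetCard 2 ×ˢ (V \ T)) + 1 := Nat.add_le_add_right card_image_le 1
    _ = 1 + 3 * (#V - 3) := by
        rw [card_product, card_powersetCard, hT, card_sdiff_of_subset hTV, hT]
        norm_num [add_comm]

lemma quadruple_subset_of_triples (hFV : F ⊆ V.powersetCard 3) {x y c c' : α}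
    (hT : {x, y, c} ∈ F) (hT' : {x, y, c'} ∈ F) : {x, y, c, c'} ⊆ V := by
  have hTV := (mem_powersetCard.1 (hFV hT)).1
  have hT'V := (mem_powersetCard.1 (hFV hT')).1
  simp only [insert_subset_iff, singleton_subset_iff] at hTV hT'V ⊢
  exact ⟨hTV.1, hTV.2.1, hTV.2.2, hT'V.2.2⟩

lemma card_sdiff_of_triples (hFV : F ⊆ V.powersetCard 3) {x y c c' : α} (hcc' : c ≠ c')
    (hT : {x, y, c} ∈ F) (hT' : {x, y, c'} ∈ F) : #(V \ {x, y, c, c'}) = #V - 4 := by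
  obtain ⟨hxy, hxc, hyc⟩ := ne_of_card_eq_three (mem_powersetCard.1 (hFV hT)).2
  obtain ⟨-, hxc', hyc'⟩ := ne_of_card_eq_three (mem_powersetCard.1 (hFV hT')).2
  rw [card_sdiff_of_subset (quadruple_subset_of_triples hFV hT hT'),
    card_eq_four.2 ⟨x, y, c, c', hxy, hxc, hxc', hyc, hyc', hcc', rfl⟩]

lemma exists_triples_of_one_lt_codegree (h3 : ∀ S ∈ F, #S = 3) {x y : α} (hxy : x ≠ y)
    (hcod : 1 < codegree F x y) : ∃ c c', c ≠ c' ∧ {x, y, c} ∈ F ∧ {x, y, c'} ∈ F := by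
  obtain ⟨A, hA, B, hB, hAB⟩ := one_lt_card.1 hcod
  simp only [mem_filter] at hA hB
  obtain ⟨c, rfl⟩ := exists_eq_triple (h3 A hA.1) hA.2.1 hA.2.2 hxy
  obtain ⟨c', rfl⟩ := exists_eq_triple (h3 B hB.1) hB.2.1 hB.2.2 hxy
  exact ⟨c, c', by rintro rfl; exact hAB rfl, hA.1, hB.1⟩

def ThreeSixIntersecting (F : Finset (Finset α)) : Prop :=
  ∀ ⦃A⦄, A ∈ F → ∀ ⦃B⦄, B ∈ F → ∀ ⦃C⦄, C ∈ F → A ≠ B → A ≠ C → B ≠ C →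
    #(A ∪ B ∪ C) ≤ 6 → (A ∩ B ∩ C).Nonempty

lemma _root_.CondIntersecting.threeSixIntersecting {n : ℕ} {F : Finset (Finset (Fin n))}
    (h : CondIntersecting 3 6 F) : ThreeSixIntersecting F := by
  intro A hA B hB C hC hAB hAC hBC hU
  rw [nonempty_iff_ne_empty]
  intro hI
  refine h ⟨{A, B, C}, ?_, card_eq_three.2 ⟨A, B, C, hAB, hAC, hBC, rfl⟩, ?_, ?_⟩
  · simp [insert_subset_iff, hA, hB, hC]
  · simpa [union_assoc] using hU
  · simpa [inter_assoc] using hI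

lemma ThreeSixIntersecting.mono (hF : ThreeSixIntersecting F) (h : G ⊆ F) :
    ThreeSixIntersecting G :=
  fun _A hA _B hB _C hC => hF (h hA) (h hB) (h hC)

lemma ThreeSixIntersecting.mem_or_mem_of_one_lt_codegree (hF : ThreeSixIntersecting F)
    (h3 : ∀ S ∈ F, #S = 3) {u v w : α} {A C : Finset α} (huv : u ≠ v)
    (hcod : 1 < codegree F u v) (hA : A ∈ F) (huA : u ∈ A) (hvA : v ∈ A) (hC : C ∈ F)
    (hwA : w ∈ A) (hwC : w ∈ C) : u ∈ C ∨ v ∈ C := by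
  by_contra! ⟨huC, hvC⟩
  obtain ⟨B, hB, hBA⟩ := exists_mem_ne hcod A
  simp only [mem_filter] at hB
  obtain ⟨hB, huB, hvB⟩ := hB
  have hwu : w ≠ u := by rintro rfl; exact huC hwC
  have hwv : w ≠ v := by rintro rfl; exact hvC hwC
  have hAeq := eq_triple_of_mem (h3 A hA) huA hvA hwA huv hwu.symm hwv.symm
  have hunion : #(A ∪ B ∪ C) ≤ 6 := by
    have hsub : A ⊆ B ∪ C := by
      rw [hAeq]; simp [insert_subset_iff, huB, hvB, hwC]
    rw [union_assoc, union_eq_right.2 hsub]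
    exact (card_union_le B C).trans (by rw [h3 B hB, h3 C hC])
  obtain ⟨t, ht⟩ := hF hA hB hC hBA.symm (by rintro rfl; exact huC huA)
    (by rintro rfl; exact huC huB) hunion
  simp only [mem_inter] at ht
  obtain ⟨⟨htA, htB⟩, htC⟩ := ht
  have htu : u ≠ t := by rintro rfl; exact huC htC
  have htv : v ≠ t := by rintro rfl; exact hvC htC
  exact hBA (by rw [eq_triple_of_mem (h3 B hB) huB hvB htB huv htu htv,
    eq_triple_of_mem (h3 A hA) huA hvA htA huv htu htv])

lemma ThreeSixIntersecting.mem_of_mem_of_notMem (hF : ThreeSixIntersecting F)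
    {C D : Finset α} {x y c : α} (hT : {x, y, c} ∈ F) (hC : C ∈ F) (hD : D ∈ F)
    (hxC : x ∈ C) (hyC : y ∉ C) (hyD : y ∈ D) (hxD : x ∉ D)
    (hU : #({x, y, c} ∪ C ∪ D) ≤ 6) : c ∈ C := by
  obtain ⟨t, ht⟩ := hF hT hC hD (by rintro rfl; simp at hyC) (by rintro rfl; simp at hxD)
    (by rintro rfl; exact hxD hxC) hU
  simp only [mem_inter, mem_insert, mem_singleton] at ht
  obtain ⟨⟨rfl | rfl | rfl, htC⟩, htD⟩ := ht
  exacts [absurd htD hxD, absurd htC hyC, htC]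

lemma ThreeSixIntersecting.subset_sdiff_of_notMem (hF : ThreeSixIntersecting F)
    (hFV : F ⊆ V.powersetCard 3) {x y c c' : α} (hxy : x ≠ y) (hcod : 1 < codegree F x y)
    (hT : {x, y, c} ∈ F) (hT' : {x, y, c'} ∈ F) {C : Finset α} (hC : C ∈ F) (hxC : x ∉ C)
    (hyC : y ∉ C) : C ⊆ V \ {x, y, c, c'} := by
  have h3 : ∀ S ∈ F, #S = 3 := fun S hS => (mem_powersetCard.1 (hFV hS)).2
  have hcC : c ∉ C := fun h =>
    (hF.mem_or_mem_of_one_lt_codegree h3 hxy hcod hT (by simp) (by simp) hC (by simp) h).elim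
      hxC hyC
  have hc'C : c' ∉ C := fun h =>
    (hF.mem_or_mem_of_one_lt_codegree h3 hxy hcod hT' (by simp) (by simp) hC (by simp) h).elim
      hxC hyC
  refine fun t ht => mem_sdiff.2 ⟨(mem_powersetCard.1 (hFV hC)).1 ht, ?_⟩
  simp only [mem_insert, mem_singleton]
  rintro (rfl | rfl | rfl | rfl) <;> contradiction

lemma ThreeSixIntersecting.eq_of_mem_of_notMem (hF : ThreeSixIntersecting F)
    (h3 : ∀ S ∈ F, #S = 3) {x y c c' : α} (hcc' : c ≠ c') (hT : {x, y, c} ∈ F)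
    (hT' : {x, y, c'} ∈ F) {C D : Finset α} (hC : C ∈ F) (hD : D ∈ F) (hxC : x ∈ C)
    (hyC : y ∉ C) (hyD : y ∈ D) (hxD : x ∉ D) (hU : ∀ A ∈ F, #(A ∪ C ∪ D) ≤ 6) :
    C = {x, c, c'} := by
  obtain ⟨-, hxc, -⟩ := ne_of_card_eq_three (h3 _ hT)
  obtain ⟨-, hxc', -⟩ := ne_of_card_eq_three (h3 _ hT')
  exact eq_triple_of_mem (h3 C hC) hxC
    (hF.mem_of_mem_of_notMem hT hC hD hxC hyC hyD hxD (hU _ hT))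
    (hF.mem_of_mem_of_notMem hT' hC hD hxC hyC hyD hxD (hU _ hT')) hxc hxc' hcc'

lemma ThreeSixIntersecting.degree_le_codegree (hF : ThreeSixIntersecting F)
    (h3 : ∀ S ∈ F, #S = 3) {x y c : α} (hxy : x ≠ y) (hcod : 1 < codegree F x y)
    (hT : {x, y, c} ∈ F) (hxc : codegree F x c ≤ 1) : degree F c ≤ codegree F y c := by
  refine card_le_card fun C hC => ?_
  simp only [mem_filter] at hC ⊢
  refine ⟨hC.1, ?_, hC.2⟩
  rcases hF.mem_or_mem_of_one_lt_codegree h3 hxy hcod hT (by simp) (by simp) hC.1 (by simp) hC.2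
    with hxC | hyC
  · rw [card_le_one.1 hxc C (by simp [hC.1, hxC, hC.2]) {x, y, c} (by simp [hT])]
    simp
  · exact hyC

lemma ThreeSixIntersecting.card_le_six_of_card_eq_five (hF : ThreeSixIntersecting F)
    (hFV : F ⊆ V.powersetCard 3) (hV : #V = 5) {x y c c' : α} (hxy : x ≠ y)
    (hcod : 1 < codegree F x y) (hcc' : c ≠ c') (hT : {x, y, c} ∈ F) (hT' : {x, y, c'} ∈ F) :
    #F ≤ 6 := by
  have h3 : ∀ S ∈ F, #S = 3 := fun S hS => (mem_powersetCard.1 (hFV hS)).2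
  have hxV : x ∈ V := (mem_powersetCard.1 (hFV hT)).1 (by simp)
  have hyV : y ∈ V := (mem_powersetCard.1 (hFV hT)).1 (by simp)
  have hmeet : ∀ C ∈ F, x ∈ C ∨ y ∈ C := by
    intro C hC
    by_contra! ⟨hxC, hyC⟩
    have := card_le_card (hF.subset_sdiff_of_notMem hFV hxy hcod hT hT' hC hxC hyC)
    rw [card_sdiff_of_triples hFV hcc' hT hT', h3 C hC, hV] at this
    omega
  by_cases hX : ∀ C ∈ F, x ∈ C
  · rw [← filter_true_of_mem hX]
    exact (degree_le hFV hxV).trans_eq (by rw [hV]; rfl)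
  by_cases hY : ∀ C ∈ F, y ∈ C
  · rw [← filter_true_of_mem hY]
    exact (degree_le hFV hyV).trans_eq (by rw [hV]; rfl)
  push Not at hX hY
  obtain ⟨Cy, hCy, hxCy⟩ := hX
  obtain ⟨Cx, hCx, hyCx⟩ := hY
  have hU : ∀ {B C}, B ∈ F → C ∈ F → ∀ A ∈ F, #(A ∪ B ∪ C) ≤ 6 := fun hB hC A hA =>
    (card_le_card (union_subset (union_subset (mem_powersetCard.1 (hFV hA)).1
      (mem_powersetCard.1 (hFV hB)).1) (mem_powersetCard.1 (hFV hC)).1)).trans (by omega)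
  have hcover : F ⊆ {C ∈ F | x ∈ C ∧ y ∈ C} ∪ {{x, c, c'}, {y, c, c'}} := by
    intro C hC
    rw [mem_union, mem_filter, mem_insert, mem_singleton]
    by_cases hxyC : x ∈ C ∧ y ∈ C
    · exact Or.inl ⟨hC, hxyC⟩
    right
    rcases hmeet C hC with hxC | hyC
    · exact Or.inl (hF.eq_of_mem_of_notMem h3 hcc' hT hT' hC hCy hxC (hxyC ⟨hxC, ·⟩)
        ((hmeet Cy hCy).resolve_left hxCy) hxCy (hU hC hCy))
    · rw [insert_comm] at hT hT'
      exact Or.inr (hF.eq_of_mem_of_notMem h3 hcc' hT hT' hC hCx hyC (hxyC ⟨·, hyC⟩)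
        ((hmeet Cx hCx).resolve_right hyCx) hyCx (hU hC hCx))
  calc #F ≤ codegree F x y + 2 :=
        (card_le_card hcover).trans <| (card_union_le _ _).trans <|
          Nat.add_le_add_left card_le_two _
    _ ≤ 6 := by have := codegree_le hFV hxy hxV hyV; omega

lemma ThreeSixIntersecting.card_le_of_degree_le (hF : ThreeSixIntersecting F)
    (hFV : F ⊆ V.powersetCard 3)
    (ih : ∀ W ⊂ V, ∀ {G : Finset (Finset α)}, ThreeSixIntersecting G → G ⊆ W.powersetCard 3 →
      #G ≤ extremalBound #W)
    (hV : 6 ≤ #V) {z : α} (hz : z ∈ V) (hdeg : degree F z ≤ #V - 2) :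
    #F ≤ (#V - 1).choose 2 := by
  have hrest : {A ∈ F | z ∉ A} ⊆ (V.erase z).powersetCard 3 := fun A hA => by
    obtain ⟨hAF, hzA⟩ := mem_filter.1 hA
    obtain ⟨hAV, hA3⟩ := mem_powersetCard.1 (hFV hAF)
    exact mem_powersetCard.2
      ⟨fun t ht => mem_erase.2 ⟨by rintro rfl; exact hzA ht, hAV ht⟩, hA3⟩
  have := ih _ (erase_ssubset hz) (hF.mono (filter_subset _ _)) hrest
  rw [card_erase_of_mem hz, extremalBound_of_five_le (by omega),
    show #V - 1 - 1 = #V - 2 by omega] at this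
  rw [← card_filter_add_card_filter_not (s := F) (z ∈ ·), choose_two_pred (by omega)]
  rw [degree] at hdeg
  omega

lemma ThreeSixIntersecting.card_le_of_one_lt_codegrees (hF : ThreeSixIntersecting F)
    (hFV : F ⊆ V.powersetCard 3)
    (ih : ∀ W ⊂ V, ∀ {G : Finset (Finset α)}, ThreeSixIntersecting G → G ⊆ W.powersetCard 3 →
      #G ≤ extremalBound #W)
    {x y c c' : α} (hxy : x ≠ y) (hcc' : c ≠ c') (hT : {x, y, c} ∈ F) (hT' : {x, y, c'} ∈ F)
    (hcod : 1 < codegree F x y) (hxc : 1 < codegree F x c) (hyc : 1 < codegree F y c) :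
    #F ≤ 1 + 3 * (#V - 3) + extremalBound (#V - 4) := by
  have h3 : ∀ S ∈ F, #S = 3 := fun S hS => (mem_powersetCard.1 (hFV hS)).2
  obtain ⟨-, hxc', hyc'⟩ := ne_of_card_eq_three (h3 _ hT)
  set T : Finset α := {x, y, c}
  have hxT : x ∈ T := by simp [T]
  have hyT : y ∈ T := by simp [T]
  have hcT : c ∈ T := by simp [T]
  have hrest : {C ∈ F | ¬ 2 ≤ #(C ∩ T)} ⊆ (V \ {x, y, c, c'}).powersetCard 3 := by
    intro C hC
    obtain ⟨hCF, hC2⟩ := mem_filter.1 hC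
    have hpair : ∀ {a b}, a ∈ T → b ∈ T → a ≠ b → a ∈ C → b ∉ C := fun ha hb hab haC hbC =>
      hC2 (one_lt_card_iff.2 ⟨_, _, mem_inter.2 ⟨haC, ha⟩, mem_inter.2 ⟨hbC, hb⟩, hab⟩)
    have hxC : x ∉ C := fun hxC =>
      (hF.mem_or_mem_of_one_lt_codegree h3 hyc' hyc hT hyT hcT hCF hxT hxC).elim
        (hpair hxT hyT hxy hxC) (hpair hxT hcT hxc' hxC)
    have hyC : y ∉ C := fun hyC =>
      (hF.mem_or_mem_of_one_lt_codegree h3 hxc' hxc hT hxT hcT hCF hyT hyC).elim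
        hxC (hpair hyT hcT hyc' hyC)
    exact mem_powersetCard.2 ⟨hF.subset_sdiff_of_notMem hFV hxy hcod hT hT' hCF hxC hyC, h3 C hCF⟩
  have hR := ih _ (sdiff_ssubset (quadruple_subset_of_triples hFV hT hT') (by simp))
    (hF.mono (filter_subset _ _)) hrest
  rw [card_sdiff_of_triples hFV hcc' hT hT'] at hR
  rw [← card_filter_add_card_filter_not (s := F) (fun C => 2 ≤ #(C ∩ T))]
  exact add_le_add (card_filter_two_le_card_inter_le hFV (mem_powersetCard.1 (hFV hT)).1
    (h3 _ hT)) hR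

lemma ThreeSixIntersecting.card_le_of_six_le (hF : ThreeSixIntersecting F)
    (hFV : F ⊆ V.powersetCard 3)
    (ih : ∀ W ⊂ V, ∀ {G : Finset (Finset α)}, ThreeSixIntersecting G → G ⊆ W.powersetCard 3 →
      #G ≤ extremalBound #W)
    (hV : 6 ≤ #V) {x y c c' : α} (hxy : x ≠ y) (hcod : 1 < codegree F x y) (hcc' : c ≠ c')
    (hT : {x, y, c} ∈ F) (hT' : {x, y, c'} ∈ F) : #F ≤ (#V - 1).choose 2 := by
  have h3 : ∀ S ∈ F, #S = 3 := fun S hS => (mem_powersetCard.1 (hFV hS)).2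
  obtain ⟨-, hxc, hyc⟩ := ne_of_card_eq_three (h3 _ hT)
  have hTV := (mem_powersetCard.1 (hFV hT)).1
  have hxV : x ∈ V := hTV (by simp)
  have hyV : y ∈ V := hTV (by simp)
  have hcV : c ∈ V := hTV (by simp)
  by_cases hxc' : 1 < codegree F x c
  · by_cases hyc' : 1 < codegree F y c
    · exact (hF.card_le_of_one_lt_codegrees hFV ih hxy hcc' hT hT' hcod hxc' hyc').trans
        (one_add_three_mul_add_extremalBound_le hV)
    · have hT_yx : {y, x, c} ∈ F := by rwa [insert_comm]
      have hdeg := hF.degree_le_codegree h3 hxy.symm (codegree_comm F x y ▸ hcod) hT_yx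
        (not_lt.1 hyc')
      exact hF.card_le_of_degree_le hFV ih hV hcV (hdeg.trans (codegree_le hFV hxc hxV hcV))
  · have hdeg := hF.degree_le_codegree h3 hxy hcod hT (not_lt.1 hxc')
    exact hF.card_le_of_degree_le hFV ih hV hcV (hdeg.trans (codegree_le hFV hyc hyV hcV))

theorem ThreeSixIntersecting.card_le_extremalBound (hF : ThreeSixIntersecting F)
    (hFV : F ⊆ V.powersetCard 3) : #F ≤ extremalBound #V := by
  induction V using Finset.strongInduction generalizing F with
  | H V ih =>
  have h3 : ∀ S ∈ F, #S = 3 := fun S hS => (mem_powersetCard.1 (hFV hS)).2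
  rcases le_or_gt #V 4 with hV | hV
  · rw [extremalBound_of_le_four hV, ← card_powersetCard]
    exact card_le_card hFV
  rw [extremalBound_of_five_le hV]
  by_cases hlin : ∀ u v, u ≠ v → codegree F u v ≤ 1
  · have hpairs := choose_two_mul_card_le hFV hlin
    have := choose_two_le_three_mul (m := #V) (by omega)
    rw [show (3 : ℕ).choose 2 = 3 from rfl] at hpairs
    omega
  push Not at hlin
  obtain ⟨x, y, hxy, hcod⟩ := hlin
  obtain ⟨c, c', hcc', hT, hT'⟩ := exists_triples_of_one_lt_codegree h3 hxy hcod
  rcases (show #V = 5 ∨ 6 ≤ #V by omega) with h5 | h6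
  · rw [h5]
    exact hF.card_le_six_of_card_eq_five hFV h5 hxy hcod hcc' hT hT'
  · exact hF.card_le_of_six_le hFV ih h6 hxy hcod hcc' hT hT'

end TripleFamily

theorem stmt17 (n : ℕ) (hn : 5 ≤ n)
    (F : Finset (Finset (Fin n))) (hunif : ∀ S ∈ F, S.card = 3)
    (hci : CondIntersecting 3 6 F) :
    F.card ≤ (n - 1).choose 2 := by
  have hFV : F ⊆ (univ : Finset (Fin n)).powersetCard 3 := fun S hS =>
    mem_powersetCard.2 ⟨subset_univ S, hunif S hS⟩
  have := hci.threeSixIntersecting.card_le_extremalBound hFV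
  rwa [card_univ, Fintype.card_fin, TripleFamily.extremalBound_of_five_le hn] at this
end
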